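/- arXiv:1302.4278 — 5 statements merged into one kernel-verified Lean document; each statement's English description precedes it below -/
import Mathlib

section
/- Fix m ∈ ℕ. Let x ∈ D[0,1] and ν ∈ [0,1]^m be such that x is continuous at each coordinate ν_1, …, ν_m. If (x_n) is a sequence in D[0,1] converging to x in the Skorohod topology (i.e. there exist λ_n ∈ Λ with sup_t |λ_n(t) − t| → 0 and sup_t |x_n(t) − x(λ_n(t))| → 0) and ν^{(n)} ∈ [0,1]^m converges to ν componentwise, then the projections converge: (x_n(ν^{(n)}_1), …, x_n(ν^{(n)}_m)) → (x(ν_1), …, x(ν_m)) in ℝ^m. In particular the projection operator Π(x, ν) = (x(ν_1), …, x(ν_m)) is continuous at (x, ν). -/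
open Set Filter

/-- A function `x : ℝ → ℝ` is RCLL (càdlàg) on `[0,1]`. -/
def RCLL (x : ℝ → ℝ) : Prop :=
  (∀ t ∈ Set.Ico (0:ℝ) 1,
      Filter.Tendsto x (nhdsWithin t (Set.Ioc t 1)) (nhds (x t))) ∧
  (∀ t ∈ Set.Ioc (0:ℝ) 1,
      ∃ L : ℝ, Filter.Tendsto x (nhdsWithin t (Set.Ico 0 t)) (nhds L))

/-- The uniform "norm" of a function over `[0,1]`. -/
noncomputable def unifNorm (f : ℝ → ℝ) : ℝ :=
  sSup ((fun t => |f t|) '' Set.Icc 0 1)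

/-- Membership in `Λ`: a continuous, strictly increasing bijection of `[0,1]`
onto itself fixing the endpoints. -/
def MemLambda (l : ℝ → ℝ) : Prop :=
  ContinuousOn l (Set.Icc 0 1) ∧ StrictMonoOn l (Set.Icc 0 1) ∧
    Set.BijOn l (Set.Icc 0 1) (Set.Icc 0 1) ∧ l 0 = 0 ∧ l 1 = 1

/-- Skorohod convergence of a sequence `x_n → x` in `D[0,1]`: there exist
`λ_n ∈ Λ` with `sup_t |λ_n(t) − t| → 0` and `sup_t |x_n(t) − x(λ_n(t))| → 0`. -/
def SkorohodTendsto (xn : ℕ → ℝ → ℝ) (x : ℝ → ℝ) : Prop :=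
  ∃ l : ℕ → ℝ → ℝ, (∀ n, MemLambda (l n)) ∧
    Filter.Tendsto (fun n => unifNorm (fun t => l n t - t)) Filter.atTop (nhds 0) ∧
    Filter.Tendsto (fun n => unifNorm (fun t => xn n t - x (l n t))) Filter.atTop (nhds 0)

/-- The projection operator `Π(x, ν) = (x(ν_1), …, x(ν_m))`. -/
def proj (m : ℕ) (x : ℝ → ℝ) (ν : Fin m → ℝ) : Fin m → ℝ := fun i => x (ν i)

/-!
Write `x_n(ν_n) = (x_n − x ∘ λ_n)(ν_n) + x(λ_n(ν_n))`. The first term is bounded by the uniform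
distance `‖x_n − x ∘ λ_n‖`, which tends to `0`; and `λ_n(ν_n) → ν` because `‖λ_n − id‖ → 0`, so
continuity of `x` at `ν` handles the second term. The uniform bounds are only meaningful because
càdlàg functions are bounded on `[0,1]`: `unifNorm` is an `sSup`, which is `0` on an unbounded set.
-/

open Topology

theorem Filter.isBoundedUnder_sup {α β : Type*} {r : α → α → Prop} [IsTrans α r] [IsDirected α r]
    {f g : Filter β} {u : β → α} (hf : f.IsBoundedUnder r u)
    (hg : g.IsBoundedUnder r u) : (f ⊔ g).IsBoundedUnder r u := by
  rw [IsBoundedUnder, map_sup]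
  exact isBounded_sup hf hg

theorem IsCompact.bddAbove_image_of_isBoundedUnder {X α : Type*} [TopologicalSpace X]
    [SemilatticeSup α] [Nonempty α] {K : Set X} {f : X → α} (hK : IsCompact K)
    (hf : ∀ t ∈ K, (𝓝[K] t).IsBoundedUnder (· ≤ ·) f) : BddAbove (f '' K) := by
  refine hK.induction_on (by simp) (fun s t hst ht => ht.mono (image_mono hst))
    (fun s t hs ht => by rw [image_union]; exact hs.union ht) fun t ht => ?_
  obtain ⟨M, hM⟩ := hf t ht
  exact ⟨{s | f s ≤ M}, hM, M, by rintro _ ⟨s, hs, rfl⟩; exact hs⟩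

theorem RCLL.isBoundedUnder_abs {x : ℝ → ℝ} (hx : RCLL x) {t : ℝ} (ht : t ∈ Icc (0:ℝ) 1) :
    (𝓝[Icc 0 1] t).IsBoundedUnder (· ≤ ·) fun s => |x s| := by
  have hsplit : Icc (0:ℝ) 1 ⊆ Ico 0 t ∪ {t} ∪ Ioc t 1 := fun s hs => by
    rcases lt_trichotomy s t with h | rfl | h
    exacts [Or.inl (Or.inl ⟨hs.1, h⟩), Or.inl (Or.inr rfl), Or.inr ⟨h, hs.2⟩]
  refine IsBoundedUnder.mono (nhdsWithin_mono t hsplit) ?_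
  rw [nhdsWithin_union, nhdsWithin_union, nhdsWithin_singleton]
  refine isBoundedUnder_sup (isBoundedUnder_sup ?_ ⟨|x t|, by simp⟩) ?_
  · rcases ht.1.eq_or_lt with rfl | h0
    · exact ⟨0, by simp⟩
    · obtain ⟨L, hL⟩ := hx.2 t ⟨h0, ht.2⟩
      exact hL.abs.isBoundedUnder_le
  · rcases ht.2.eq_or_lt with rfl | h1
    · exact ⟨0, by simp⟩
    · exact (hx.1 t ⟨ht.1, h1⟩).abs.isBoundedUnder_le

theorem RCLL.bddAbove_abs_image {x : ℝ → ℝ} (hx : RCLL x) :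
    BddAbove ((fun t => |x t|) '' Icc 0 1) :=
  isCompact_Icc.bddAbove_image_of_isBoundedUnder fun _ => hx.isBoundedUnder_abs

theorem abs_le_unifNorm {f : ℝ → ℝ} (hf : BddAbove ((fun t => |f t|) '' Icc 0 1)) {t : ℝ}
    (ht : t ∈ Icc (0:ℝ) 1) : |f t| ≤ unifNorm f :=
  le_csSup hf ⟨t, ht, rfl⟩

theorem tendsto_apply_of_unifNorm_tendsto_zero {ι : Type*} {L : Filter ι} {f : ι → ℝ → ℝ}
    (hf : ∀ n, BddAbove ((fun t => |f n t|) '' Icc 0 1))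
    (hlim : Tendsto (fun n => unifNorm (f n)) L (𝓝 0)) {t : ι → ℝ}
    (ht : ∀ n, t n ∈ Icc (0:ℝ) 1) : Tendsto (fun n => f n (t n)) L (𝓝 0) :=
  (tendsto_zero_iff_abs_tendsto_zero _).2 <|
    squeeze_zero (fun _ => abs_nonneg _) (fun n => abs_le_unifNorm (hf n) (ht n)) hlim

theorem bddAbove_abs_sub_comp_image {α β : Type*} {f : α → ℝ} {g : β → ℝ} {l : α → β}
    {s : Set α} {s' : Set β} (hf : BddAbove ((fun t => |f t|) '' s))
    (hg : BddAbove ((fun t => |g t|) '' s')) (hl : MapsTo l s s') :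
    BddAbove ((fun t => |f t - g (l t)|) '' s) := by
  obtain ⟨A, hA⟩ := hf
  obtain ⟨B, hB⟩ := hg
  refine ⟨A + B, ?_⟩
  rintro _ ⟨t, ht, rfl⟩
  exact (abs_sub _ _).trans (add_le_add (hA ⟨t, ht, rfl⟩) (hB ⟨l t, hl ht, rfl⟩))

theorem MemLambda.bddAbove_abs_sub_id_image {l : ℝ → ℝ} (hl : MemLambda l) :
    BddAbove ((fun t => |l t - t|) '' Icc 0 1) :=
  isCompact_Icc.bddAbove_image (hl.1.sub continuousOn_id).abs

theorem proj_continuousAt_general (m : ℕ) (x : ℝ → ℝ) (hx : RCLL x)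
    (ν : Fin m → ℝ)
    (hcont : ∀ i, ContinuousWithinAt x (Set.Icc 0 1) (ν i))
    (xn : ℕ → ℝ → ℝ) (hxn : ∀ n, RCLL (xn n))
    (hconv : SkorohodTendsto xn x)
    (νn : ℕ → Fin m → ℝ) (hνn : ∀ n i, νn n i ∈ Set.Icc (0:ℝ) 1)
    (hνconv : ∀ i, Filter.Tendsto (fun n => νn n i) Filter.atTop (nhds (ν i))) :
    Filter.Tendsto (fun n => proj m (xn n) (νn n)) Filter.atTop
      (nhds (proj m x ν)) := by
  obtain ⟨l, hl, hl_lim, hgap_lim⟩ := hconv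
  rw [tendsto_pi_nhds]
  intro i
  have hl_maps : ∀ n, MapsTo (l n) (Icc 0 1) (Icc 0 1) := fun n => (hl n).2.2.1.mapsTo
  have htime : Tendsto (fun n => l n (νn n i)) atTop (𝓝[Icc 0 1] (ν i)) := by
    refine tendsto_nhdsWithin_iff.2 ⟨?_, .of_forall fun n => hl_maps n (hνn n i)⟩
    have hshift := tendsto_apply_of_unifNorm_tendsto_zero
      (fun n => (hl n).bddAbove_abs_sub_id_image) hl_lim (hνn · i)
    simpa using hshift.add (hνconv i)
  have hgap : Tendsto (fun n => xn n (νn n i) - x (l n (νn n i))) atTop (𝓝 0) :=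
    tendsto_apply_of_unifNorm_tendsto_zero
      (fun n => bddAbove_abs_sub_comp_image (hxn n).bddAbove_abs_image hx.bddAbove_abs_image
        (hl_maps n)) hgap_lim (hνn · i)
  simpa [proj] using hgap.add ((hcont i).tendsto.comp htime)

/-- Continuity of the projection operator `Π` at `(x, ν)` when `x ∈ D[0,1]` is
continuous at each coordinate `ν_i`: if `x_n → x` in the Skorohod topology and
`ν^{(n)} → ν` componentwise in `[0,1]^m`, then
`(x_n(ν^{(n)}_1), …, x_n(ν^{(n)}_m)) → (x(ν_1), …, x(ν_m))` in `ℝ^m`. -/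
theorem proj_continuousAt (m : ℕ) (x : ℝ → ℝ) (hx : RCLL x)
    (ν : Fin m → ℝ) (hν : ∀ i, ν i ∈ Set.Icc (0:ℝ) 1)
    (hcont : ∀ i, ContinuousWithinAt x (Set.Icc 0 1) (ν i))
    (xn : ℕ → ℝ → ℝ) (hxn : ∀ n, RCLL (xn n))
    (hconv : SkorohodTendsto xn x)
    (νn : ℕ → Fin m → ℝ) (hνn : ∀ n i, νn n i ∈ Set.Icc (0:ℝ) 1)
    (hνconv : ∀ i, Filter.Tendsto (fun n => νn n i) Filter.atTop (nhds (ν i))) :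
    Filter.Tendsto (fun n => proj m (xn n) (νn n)) Filter.atTop
      (nhds (proj m x ν)) :=
  proj_continuousAt_general m x hx ν hcont xn hxn hconv νn hνn hνconv
end

section
/- Let α, β ∈ C[0,1] with α(t) < β(t) for all t, and let x ∈ C[0,1] be any continuous function. Then for every sequence (x_n) in D[0,1] converging to x in the Skorohod topology, liminf_{n → ∞} π(x_n) ≥ π(x). -/
open Set Filter

/-- The first exit time `π(x) = inf{ t ∈ [0,1] : x(t) ∉ (α(t), β(t)) } ∧ 1`
(with the convention `inf ∅ = +∞`, realized by adjoining `{1}` before taking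
the infimum, since the exit set is contained in `[0,1]`). -/
noncomputable def exitTime (a b x : ℝ → ℝ) : ℝ :=
  sInf ({t ∈ Set.Icc (0:ℝ) 1 | x t ≤ a t ∨ b t ≤ x t} ∪ {1})

/- ### Auxiliary lemmas -/

lemma rcll_bounded (f : ℝ → ℝ) (hf : RCLL f) :
    ∃ M : ℝ, ∀ t ∈ Set.Icc (0:ℝ) 1, |f t| ≤ M := by
  have hloc : ∀ t ∈ Set.Icc (0:ℝ) 1, ∃ δ > (0:ℝ), ∃ M : ℝ,
      ∀ u ∈ Set.Icc (0:ℝ) 1, |u - t| < δ → |f u| ≤ M := by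
    intro t ht
    have hR : ∃ δr > (0:ℝ), ∀ u ∈ Set.Icc (0:ℝ) 1, t < u → u - t < δr →
        |f u| ≤ |f t| + 1 := by
      rcases eq_or_lt_of_le ht.2 with h1 | h1
      · exact ⟨1, one_pos, fun u hu htu _ => absurd (htu.trans_le hu.2) (by rw [← h1]; simp)⟩
      · have h := hf.1 t ⟨ht.1, h1⟩
        rw [Metric.tendsto_nhdsWithin_nhds] at h
        obtain ⟨δ, hδ, h⟩ := h 1 one_pos
        refine ⟨δ, hδ, fun u hu htu hud => ?_⟩
        have h2 := h (x := u) ⟨htu, hu.2⟩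
          (by rw [Real.dist_eq, abs_of_pos (sub_pos.mpr htu)]; exact hud)
        rw [Real.dist_eq] at h2
        have := abs_sub_abs_le_abs_sub (f u) (f t)
        linarith
    have hL : ∃ δl > (0:ℝ), ∃ C : ℝ, ∀ u ∈ Set.Icc (0:ℝ) 1, u < t → t - u < δl →
        |f u| ≤ C := by
      rcases eq_or_lt_of_le ht.1 with h0 | h0
      · exact ⟨1, one_pos, 0, fun u hu hut _ => absurd (hut.trans_le h0.symm.le) (not_lt.mpr hu.1)⟩
      · obtain ⟨L, hLt⟩ := hf.2 t ⟨h0, ht.2⟩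
        rw [Metric.tendsto_nhdsWithin_nhds] at hLt
        obtain ⟨δ, hδ, h⟩ := hLt 1 one_pos
        refine ⟨δ, hδ, |L| + 1, fun u hu hut hud => ?_⟩
        have h2 := h (x := u) ⟨hu.1, hut⟩
          (by rw [Real.dist_eq, abs_of_neg (sub_neg.mpr hut)]; linarith)
        rw [Real.dist_eq] at h2
        have := abs_sub_abs_le_abs_sub (f u) L
        linarith
    obtain ⟨δr, hδr, hRb⟩ := hR
    obtain ⟨δl, hδl, C, hLb⟩ := hL
    refine ⟨min δr δl, lt_min hδr hδl, max (|f t| + 1) C, fun u hu hud => ?_⟩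
    rcases lt_trichotomy u t with h | h | h
    · exact le_max_of_le_right (hLb u hu h (lt_of_le_of_lt (le_abs_self _)
        (by rw [abs_sub_comm] at hud; exact hud.trans_le (min_le_right _ _))))
    · subst h; exact le_max_of_le_left (by linarith [abs_nonneg (f u)])
    · exact le_max_of_le_left (hRb u hu h (lt_of_le_of_lt (le_abs_self _)
        (hud.trans_le (min_le_left _ _))))
  choose! δ hδ M hM using hloc
  have hcover : Set.Icc (0:ℝ) 1 ⊆ ⋃ t ∈ Set.Icc (0:ℝ) 1, Metric.ball t (δ t) := by
    intro u hu
    exact mem_biUnion hu (Metric.mem_ball_self (hδ u hu))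
  obtain ⟨s, hsub, hfin, hscov⟩ := isCompact_Icc.elim_finite_subcover_image
    (fun t _ => Metric.isOpen_ball) hcover
  obtain ⟨B, hB⟩ := (hfin.image M).bddAbove
  refine ⟨B, fun u hu => ?_⟩
  obtain ⟨t, hts, hut⟩ := mem_iUnion₂.mp (hscov hu)
  have h1 : |f u| ≤ M t := hM t (hsub hts) u hu (by rw [← Real.dist_eq]; exact hut)
  exact h1.trans (hB (Set.mem_image_of_mem M hts))

lemma le_unifNorm (f : ℝ → ℝ) (hB : BddAbove ((fun t => |f t|) '' Set.Icc 0 1))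
    {t : ℝ} (ht : t ∈ Set.Icc (0:ℝ) 1) : |f t| ≤ unifNorm f :=
  le_csSup hB ⟨t, ht, rfl⟩

lemma exitSet_mem (a b y : ℝ → ℝ) :
    (1:ℝ) ∈ ({t ∈ Set.Icc (0:ℝ) 1 | y t ≤ a t ∨ b t ≤ y t} ∪ {1}) :=
  Set.mem_union_right _ rfl

lemma exitSet_bddBelow (a b y : ℝ → ℝ) :
    BddBelow ({t ∈ Set.Icc (0:ℝ) 1 | y t ≤ a t ∨ b t ≤ y t} ∪ {1}) := by
  refine ⟨0, ?_⟩
  rintro s (⟨⟨h0, _⟩, _⟩ | rfl)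
  · exact h0
  · exact zero_le_one

lemma exitTime_nonneg (a b y : ℝ → ℝ) : 0 ≤ exitTime a b y := by
  unfold exitTime
  apply le_csInf ⟨1, exitSet_mem a b y⟩
  rintro s (⟨⟨h0, _⟩, _⟩ | rfl)
  · exact h0
  · exact zero_le_one

lemma exitTime_le_one (a b y : ℝ → ℝ) : exitTime a b y ≤ 1 :=
  csInf_le (exitSet_bddBelow a b y) (exitSet_mem a b y)

/-- For continuous barriers `α < β` and any continuous `x ∈ C[0,1]`, every
Skorohod-convergent sequence `x_n → x` in `D[0,1]` satisfies
`liminf_n π(x_n) ≥ π(x)`. -/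
theorem exitTime_le_liminf (a b : ℝ → ℝ)
    (ha : ContinuousOn a (Set.Icc 0 1)) (hb : ContinuousOn b (Set.Icc 0 1))
    (hab : ∀ t ∈ Set.Icc (0:ℝ) 1, a t < b t)
    (x : ℝ → ℝ) (hx : ContinuousOn x (Set.Icc 0 1))
    (xn : ℕ → ℝ → ℝ) (hxn : ∀ n, RCLL (xn n))
    (hconv : SkorohodTendsto xn x) :
    exitTime a b x ≤ Filter.liminf (fun n => exitTime a b (xn n)) Filter.atTop := by
  obtain ⟨l, hl, hlconv, hxconv⟩ := hconv
  set τ := exitTime a b x with hτ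
  -- the key claim
  have key : ∀ c : ℝ, c < τ → ∀ᶠ n in atTop, c ≤ exitTime a b (xn n) := by
    intro c hcτ
    rcases lt_or_ge c 0 with hc0 | hc0
    · exact Eventually.of_forall fun n => hc0.le.trans (exitTime_nonneg a b (xn n))
    have hc1 : c < 1 := lt_of_lt_of_le hcτ (exitTime_le_one a b x)
    have hsub : Set.Icc (0:ℝ) c ⊆ Set.Icc (0:ℝ) 1 := Set.Icc_subset_Icc_right hc1.le
    -- strictly inside on [0, c]
    have inside : ∀ t ∈ Set.Icc (0:ℝ) c, a t < x t ∧ x t < b t := by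
      intro t htc
      by_contra hcon
      have ht1 : t ∈ Set.Icc (0:ℝ) 1 := hsub htc
      have hmem : t ∈ ({t ∈ Set.Icc (0:ℝ) 1 | x t ≤ a t ∨ b t ≤ x t} ∪ {1}) := by
        left
        refine ⟨ht1, ?_⟩
        rcases not_and_or.mp hcon with h | h
        · exact Or.inl (not_lt.mp h)
        · exact Or.inr (not_lt.mp h)
      have : τ ≤ t := csInf_le (exitSet_bddBelow a b x) hmem
      linarith [htc.2]
    -- positive gap δ on [0, c]
    set g : ℝ → ℝ := fun t => (x t - a t) ⊓ (b t - x t) with hg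
    have hgc : ContinuousOn g (Set.Icc (0:ℝ) c) :=
      ((ContinuousOn.inf (hx.sub ha) (hb.sub hx)).mono hsub)
    obtain ⟨t0, ht0, hmin⟩ := isCompact_Icc.exists_isMinOn ⟨0, le_refl 0, hc0⟩ hgc
    set δ := g t0 with hδdef
    have hδpos : 0 < δ := lt_min (sub_pos.mpr (inside t0 ht0).1) (sub_pos.mpr (inside t0 ht0).2)
    have hgap : ∀ t ∈ Set.Icc (0:ℝ) c, δ ≤ x t - a t ∧ δ ≤ b t - x t := by
      intro t htc
      have := hmin htc
      exact ⟨le_trans this (min_le_left _ _), le_trans this (min_le_right _ _)⟩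
    -- uniform continuity of x
    have hux := isCompact_Icc.uniformContinuousOn_of_continuous hx
    rw [Metric.uniformContinuousOn_iff] at hux
    obtain ⟨δ₂, hδ₂, hucont⟩ := hux (δ / 2) (by linarith)
    -- bound on x over [0,1]
    obtain ⟨Mx, hMx⟩ := isCompact_Icc.exists_bound_of_continuousOn hx
    -- eventual smallness
    have hev1 : ∀ᶠ n in atTop, unifNorm (fun t => l n t - t) < δ₂ :=
      hlconv.eventually_lt_const hδ₂
    have hev2 : ∀ᶠ n in atTop, unifNorm (fun t => xn n t - x (l n t)) < δ / 2 :=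
      hxconv.eventually_lt_const (by linarith)
    filter_upwards [hev1, hev2] with n hn1 hn2
    -- boundedness of the two deviation functions
    have hlmap : ∀ t ∈ Set.Icc (0:ℝ) 1, l n t ∈ Set.Icc (0:ℝ) 1 :=
      fun t ht => (hl n).2.2.1.1 ht
    have hB1 : BddAbove ((fun t => |l n t - t|) '' Set.Icc 0 1) := by
      refine ⟨1, ?_⟩
      rintro y ⟨t, ht, rfl⟩
      have h1 := hlmap t ht
      rw [abs_le]
      constructor <;> [linarith [h1.1, ht.2]; linarith [h1.2, ht.1]]
    obtain ⟨Mn, hMn⟩ := rcll_bounded (xn n) (hxn n)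
    have hB2 : BddAbove ((fun t => |xn n t - x (l n t)|) '' Set.Icc 0 1) := by
      refine ⟨Mn + Mx, ?_⟩
      rintro y ⟨t, ht, rfl⟩
      have h1 := hMn t ht
      have h2 := hMx (l n t) (hlmap t ht)
      calc |xn n t - x (l n t)| ≤ |xn n t| + |x (l n t)| := abs_sub _ _
        _ ≤ Mn + Mx := by rw [Real.norm_eq_abs] at h2; linarith
    -- c is a lower bound for the exit set of xn n
    unfold exitTime
    apply le_csInf ⟨1, exitSet_mem a b (xn n)⟩
    rintro s (⟨hs01, hexit⟩ | rfl)
    · by_contra hcs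
      push_neg at hcs
      have hsc : s ∈ Set.Icc (0:ℝ) c := ⟨hs01.1, hcs.le⟩
      -- xn n s is close to x s
      have e1 : |xn n s - x (l n s)| < δ / 2 :=
        lt_of_le_of_lt (le_unifNorm _ hB2 hs01) hn2
      have e2 : |l n s - s| < δ₂ :=
        lt_of_le_of_lt (le_unifNorm _ hB1 hs01) hn1
      have e3 : |x (l n s) - x s| < δ / 2 := by
        have := hucont (l n s) (hlmap s hs01) s hs01 (by rwa [Real.dist_eq])
        rwa [Real.dist_eq] at this
      have e4 : |xn n s - x s| < δ := by
        calc |xn n s - x s| ≤ |xn n s - x (l n s)| + |x (l n s) - x s| := abs_sub_le _ _ _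
          _ < δ := by linarith
      obtain ⟨g1, g2⟩ := hgap s hsc
      rw [abs_lt] at e4
      rcases hexit with h | h
      · linarith
      · linarith
    · exact hc1.le
  -- conclude via liminf
  have hbound : IsCoboundedUnder (· ≥ ·) atTop (fun n => exitTime a b (xn n)) :=
    IsBoundedUnder.isCoboundedUnder_ge (isBoundedUnder_of ⟨1, fun n : ℕ => exitTime_le_one a b (xn n)⟩)
  apply le_of_forall_lt_imp_le_of_dense
  intro c hc
  exact Filter.le_liminf_of_le hbound (key c hc)
end

section
/- (Theorem 2.1, version for continuous approximating processes.) Fix m ∈ ℕ, vectors ν^{(1)}, …, ν^{(4)} ∈ [0,1]^m, and continuous barriers α, β ∈ C[0,1] with α(t) < β(t) for all t. Let X and X^h (h > 0) be random variables with values in C([0,1], ℝ) (equipped with the uniform metric) such that the laws of X^h converge weakly to the law of X as h → 0. Assume: (i) almost surely X(0) ∈ (α(0), β(0)); (ii) almost surely inf{ t > τ : X(t) ∉ [α(t), β(t)] } ∧ 1 = τ, where τ = π(X); (iii) g : ℝ^{4m+1} → ℝ is bounded, Borel measurable, and its set of discontinuity points N satisfies ℙ(Z ∈ N) = 0, where Z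 = ( Π(X, τ·ν^{(1)}), Π(X, ν^{(2)}), Π(X*, τ·ν^{(3)}), Π(X*, ν^{(4)}), τ ). Then V^h := E[ g( Π(X^h, τ^h·ν^{(1)}), Π(X^h, ν^{(2)}), Π(X^{h,*}, τ^h·ν^{(3)}), Π(X^{h,*}, ν^{(4)}), τ^h ) ] converges to V := E[ g(Z) ] as h → 0, where τ^h = π(X^h). -/
open Set MeasureTheory Filter

/-- The compact time interval `[0,1]`. -/
abbrev unitI : Set ℝ := Set.Icc (0:ℝ) 1

/-- Evaluation of a continuous path `x ∈ C([0,1], ℝ)` as a function on `ℝ`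
(constant outside `[0,1]`, via the projection of `ℝ` onto `[0,1]`). -/
noncomputable def ev (x : C(unitI, ℝ)) : ℝ → ℝ :=
  fun t => x (Set.projIcc (0:ℝ) 1 zero_le_one t)

/-- The running maximum `x*(t) = sup_{0 ≤ s ≤ t} x(s)`. -/
noncomputable def runMax (x : ℝ → ℝ) : ℝ → ℝ :=
  fun t => sSup (x '' Set.Icc 0 t)

/-- The random argument
`Z = ( Π(X, τ·ν¹), Π(X, ν²), Π(X*, τ·ν³), Π(X*, ν⁴), τ )`, `τ = π(X)`. -/
noncomputable def argZ (m : ℕ) (a b : ℝ → ℝ) (ν1 ν2 ν3 ν4 : Fin m → ℝ)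
    (x : ℝ → ℝ) :
    (Fin m → ℝ) × (Fin m → ℝ) × (Fin m → ℝ) × (Fin m → ℝ) × ℝ :=
  (proj m x (fun i => exitTime a b x * ν1 i), proj m x ν2,
    proj m (runMax x) (fun i => exitTime a b x * ν3 i), proj m (runMax x) ν4,
    exitTime a b x)

/-!
The functional `y ↦ g (argZ … (ev y))` is bounded, measurable and continuous at almost every
sample path of `X`, so the claim is an instance of the continuous mapping theorem, which follows
from the closed-set form of the portmanteau theorem applied to the image measures.

Everything in `argZ` depends jointly continuously on the path and on the exit time `τ`, so it
suffices to control `τ`. It is lower semicontinuous everywhere (staying strictly between the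
barriers on a compact time interval is an open condition), hence measurable. At a regular
path, points `t > τ` arbitrarily close to `τ` where the path strictly leaves `[α, β]` survive
small uniform perturbations, so `τ` is also upper semicontinuous there.
-/

open Topology
open scoped BoundedContinuousFunction

namespace MeasureTheory.ProbabilityMeasure

variable {Ω Ω' ι : Type*} [MeasurableSpace Ω] [TopologicalSpace Ω] [OpensMeasurableSpace Ω]
  [HasOuterApproxClosed Ω] {L : Filter ι} [L.IsCountablyGenerated]
  {μ : ProbabilityMeasure Ω} {μs : ι → ProbabilityMeasure Ω}

theorem tendsto_map_of_tendsto_of_ae_continuousAt [MeasurableSpace Ω'] [TopologicalSpace Ω']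
    [OpensMeasurableSpace Ω'] (hμs : Tendsto μs L (𝓝 μ)) {f : Ω → Ω'} (hf : Measurable f)
    (hcont : ∀ᵐ x ∂(μ : Measure Ω), ContinuousAt f x) :
    Tendsto (fun i ↦ (μs i).map hf.aemeasurable) L (𝓝 (μ.map hf.aemeasurable)) := by
  refine tendsto_of_forall_isClosed_limsup_le' fun F hF ↦ ?_
  simp only [toMeasure_map, Measure.map_apply hf hF.measurableSet]
  have hclosure : closure (f ⁻¹' F) ≤ᵐ[(μ : Measure Ω)] f ⁻¹' F := by
    filter_upwards [hcont] with x hx hxF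
    exact hF.closure_subset
      (closure_mono (image_preimage_subset f F) (hx.continuousWithinAt.mem_closure_image hxF))
  calc L.limsup (fun i ↦ (μs i : Measure Ω) (f ⁻¹' F))
      ≤ L.limsup (fun i ↦ (μs i : Measure Ω) (closure (f ⁻¹' F))) :=
        limsup_le_limsup (.of_forall fun i ↦ measure_mono subset_closure)
    _ ≤ (μ : Measure Ω) (closure (f ⁻¹' F)) :=
        limsup_measure_closed_le_of_tendsto hμs isClosed_closure
    _ ≤ (μ : Measure Ω) (f ⁻¹' F) := measure_mono_ae hclosure

theorem tendsto_integral_of_tendsto_of_ae_continuousAt (hμs : Tendsto μs L (𝓝 μ))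
    {f : Ω → ℝ} (hf : Measurable f) {C : ℝ} (hfC : ∀ x, |f x| ≤ C)
    (hcont : ∀ᵐ x ∂(μ : Measure Ω), ContinuousAt f x) :
    Tendsto (fun i ↦ ∫ x, f x ∂(μs i : Measure Ω)) L (𝓝 (∫ x, f x ∂(μ : Measure Ω))) := by
  let clip : ℝ →ᵇ ℝ := .ofNormedAddCommGroup (fun t ↦ max (-C) (min t C)) (by fun_prop) |C|
    fun t ↦ abs_le.2 ⟨(neg_le_neg (le_abs_self C)).trans (le_max_left _ _),
      max_le (neg_le_abs C) ((min_le_right _ _).trans (le_abs_self C))⟩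
  have hclip (ν : ProbabilityMeasure Ω) :
      ∫ x, f x ∂(ν : Measure Ω) = ∫ t, clip t ∂(ν.map hf.aemeasurable : Measure ℝ) := by
    rw [toMeasure_map, integral_map hf.aemeasurable clip.continuous.aestronglyMeasurable]
    congr with x
    have hx := abs_le.1 (hfC x)
    simp [clip, min_eq_left hx.2, max_eq_right hx.1]
  simp only [hclip]
  exact tendsto_iff_forall_integral_tendsto.1
    (tendsto_map_of_tendsto_of_ae_continuousAt hμs hf hcont) clip

end MeasureTheory.ProbabilityMeasure

theorem tendsto_integral_comp_of_ae_continuousAt {Ω E ι : Type*} [MeasurableSpace Ω]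
    (P : Measure Ω) [IsProbabilityMeasure P] [MeasurableSpace E] [PseudoMetricSpace E]
    [OpensMeasurableSpace E] {L : Filter ι} [L.IsCountablyGenerated]
    {Y : ι → Ω → E} {X : Ω → E} (hY : ∀ i, Measurable (Y i)) (hX : Measurable X)
    (hweak : ∀ F : E →ᵇ ℝ, Tendsto (fun i ↦ ∫ ω, F (Y i ω) ∂P) L (𝓝 (∫ ω, F (X ω) ∂P)))
    {φ : E → ℝ} (hφ : Measurable φ) {C : ℝ} (hφC : ∀ x, |φ x| ≤ C)
    (hcont : ∀ᵐ ω ∂P, ContinuousAt φ (X ω)) :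
    Tendsto (fun i ↦ ∫ ω, φ (Y i ω) ∂P) L (𝓝 (∫ ω, φ (X ω) ∂P)) := by
  let law (Z : Ω → E) (hZ : Measurable Z) : ProbabilityMeasure E :=
    ⟨P.map Z, Measure.isProbabilityMeasure_map hZ.aemeasurable⟩
  have hint {Z : Ω → E} (hZ : Measurable Z) {ψ : E → ℝ} (hψ : Measurable ψ) :
      ∫ x, ψ x ∂(law Z hZ : Measure E) = ∫ ω, ψ (Z ω) ∂P :=
    integral_map hZ.aemeasurable hψ.aestronglyMeasurable
  have hlaw : Tendsto (fun i ↦ law (Y i) (hY i)) L (𝓝 (law X hX)) :=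
    ProbabilityMeasure.tendsto_iff_forall_integral_tendsto.2 fun F ↦ by
      simpa only [hint _ F.continuous.measurable] using hweak F
  have hcont' : ∀ᵐ x ∂(law X hX : Measure E), ContinuousAt φ x :=
    (ae_map_iff hX.aemeasurable (IsGδ.setOfPred_continuousAt φ).measurableSet).2 hcont
  simpa only [hint _ hφ] using
    ProbabilityMeasure.tendsto_integral_of_tendsto_of_ae_continuousAt hlaw hφ hφC hcont'

lemma continuous_ev_apply : Continuous fun p : C(unitI, ℝ) × ℝ ↦ ev p.1 p.2 :=
  continuous_eval.comp (continuous_fst.prodMk ((continuous_projIcc (h := zero_le_one)).comp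
    continuous_snd))

lemma continuous_ev_apply_const (t : ℝ) : Continuous fun y : C(unitI, ℝ) ↦ ev y t :=
  continuous_eval_const _

lemma runMax_eq_sSup_image_mul (x : ℝ → ℝ) {t : ℝ} (ht : 0 ≤ t) :
    runMax x t = sSup ((fun s ↦ x (s * t)) '' Icc 0 1) := by
  rw [runMax, ← image_image x (· * t), image_mul_right_Icc zero_le_one ht, zero_mul, one_mul]

lemma continuous_sSup_image_ev_mul :
    Continuous fun p : C(unitI, ℝ) × ℝ ↦ sSup ((fun s ↦ ev p.1 (s * p.2)) '' Icc 0 1) :=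
  isCompact_Icc.continuous_sSup <| continuous_ev_apply.comp <|
    continuous_fst.fst.prodMk (continuous_snd.mul continuous_fst.snd)

/-- `argZ` of the path `p.1` with its exit time replaced by the free parameter `p.2`, and each
running maximum over `[0, t]` rewritten as a supremum over `[0, 1]`; this makes it jointly
continuous. -/
noncomputable def argZAt (m : ℕ) (ν1 ν2 ν3 ν4 : Fin m → ℝ) (p : C(unitI, ℝ) × ℝ) :
    (Fin m → ℝ) × (Fin m → ℝ) × (Fin m → ℝ) × (Fin m → ℝ) × ℝ :=
  (fun i ↦ ev p.1 (p.2 * ν1 i), fun i ↦ ev p.1 (ν2 i),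
    fun i ↦ sSup ((fun s ↦ ev p.1 (s * (p.2 * ν3 i))) '' Icc 0 1),
    fun i ↦ sSup ((fun s ↦ ev p.1 (s * ν4 i)) '' Icc 0 1), p.2)

lemma continuous_argZAt (m : ℕ) (ν1 ν2 ν3 ν4 : Fin m → ℝ) :
    Continuous (argZAt m ν1 ν2 ν3 ν4) := by
  refine .prodMk ?_ (.prodMk ?_ (.prodMk ?_ (.prodMk ?_ continuous_snd))) <;>
    refine continuous_pi fun i ↦ ?_
  · exact continuous_ev_apply.comp (continuous_fst.prodMk (continuous_snd.mul continuous_const))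
  · exact (continuous_ev_apply_const (ν2 i)).comp continuous_fst
  · exact continuous_sSup_image_ev_mul.comp
      (continuous_fst.prodMk (continuous_snd.mul continuous_const))
  · exact continuous_sSup_image_ev_mul.comp (continuous_fst.prodMk continuous_const)

section ExitTime

variable {a b : ℝ → ℝ}

lemma exitTime_le_of_mem {x : ℝ → ℝ} {t : ℝ}
    (ht : t ∈ {t ∈ Icc (0:ℝ) 1 | x t ≤ a t ∨ b t ≤ x t} ∪ {1}) : exitTime a b x ≤ t :=
  csInf_le ⟨0, by rintro s (⟨hs, -⟩ | rfl); exacts [hs.1, zero_le_one]⟩ ht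

lemma exitTime_mem_Icc (x : ℝ → ℝ) : exitTime a b x ∈ Icc (0:ℝ) 1 :=
  ⟨le_csInf ⟨1, Or.inr rfl⟩ (by rintro s (⟨hs, -⟩ | rfl); exacts [hs.1, zero_le_one]),
    exitTime_le_of_mem (Or.inr rfl)⟩

lemma le_exitTime {x : ℝ → ℝ} {c : ℝ} (hc : c ≤ 1)
    (hx : ∀ t ∈ Icc 0 c, a t < x t ∧ x t < b t) : c ≤ exitTime a b x := by
  refine le_csInf ⟨1, Or.inr rfl⟩ ?_
  rintro t (⟨ht, hxt⟩ | rfl)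
  · by_contra! htc
    obtain ⟨hat, hbt⟩ := hx t ⟨ht.1, htc.le⟩
    rcases hxt with h | h <;> linarith
  · exact hc

lemma inside_of_lt_exitTime {x : ℝ → ℝ} {t : ℝ} (ht : 0 ≤ t) (htx : t < exitTime a b x) :
    a t < x t ∧ x t < b t := by
  by_contra! hxt
  have ht1 : t ≤ 1 := (htx.trans_le (exitTime_mem_Icc x).2).le
  exact (exitTime_le_of_mem (Or.inl ⟨⟨ht, ht1⟩, (le_or_gt (x t) (a t)).imp id hxt⟩)).not_gt htx

lemma eventually_forall_inside (ha : ContinuousOn a (Icc 0 1)) (hb : ContinuousOn b (Icc 0 1))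
    {c : ℝ} (hc : c ≤ 1) {y₀ : C(unitI, ℝ)}
    (hy₀ : ∀ t ∈ Icc 0 c, a t < ev y₀ t ∧ ev y₀ t < b t) :
    ∀ᶠ y in 𝓝 y₀, ∀ t ∈ Icc 0 c, a t < ev y t ∧ ev y t < b t := by
  -- the tube lemma needs barriers continuous on all of `ℝ`
  set a' := IccExtend zero_le_one ((Icc (0:ℝ) 1).domRestrict a)
  set b' := IccExtend zero_le_one ((Icc (0:ℝ) 1).domRestrict b)
  have hext (t : ℝ) (ht : t ∈ Icc 0 c) : a' t = a t ∧ b' t = b t := by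
    have ht' : t ∈ Icc (0:ℝ) 1 := ⟨ht.1, ht.2.trans hc⟩
    exact ⟨IccExtend_of_mem _ _ ht', IccExtend_of_mem _ _ ht'⟩
  have ha' : Continuous a' := ha.domRestrict.Icc_extend'
  have hb' : Continuous b' := hb.domRestrict.Icc_extend'
  have key : ∀ᶠ y in 𝓝 y₀, ∀ t ∈ Icc 0 c, a' t < ev y t ∧ ev y t < b' t := by
    refine isCompact_Icc.eventually_forall_of_forall_eventually fun t ht ↦ ?_
    have hy₀t := hy₀ t ht
    rw [← (hext t ht).1, ← (hext t ht).2] at hy₀t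
    exact (ContinuousAt.eventually_lt (x₀ := (y₀, t)) (ha'.comp continuous_snd).continuousAt
      continuous_ev_apply.continuousAt hy₀t.1).and (ContinuousAt.eventually_lt (x₀ := (y₀, t))
        continuous_ev_apply.continuousAt (hb'.comp continuous_snd).continuousAt hy₀t.2)
  filter_upwards [key] with y hy t ht
  rw [← (hext t ht).1, ← (hext t ht).2]
  exact hy t ht

lemma lowerSemicontinuous_exitTime_ev (ha : ContinuousOn a (Icc 0 1))
    (hb : ContinuousOn b (Icc 0 1)) :
    LowerSemicontinuous fun y : C(unitI, ℝ) ↦ exitTime a b (ev y) := by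
  intro y₀ c (hc : c < exitTime a b (ev y₀))
  obtain ⟨c', hcc', hc'τ⟩ := exists_between hc
  have hc'1 : c' ≤ 1 := hc'τ.le.trans (exitTime_mem_Icc _).2
  filter_upwards [eventually_forall_inside ha hb hc'1
    fun t ht ↦ inside_of_lt_exitTime ht.1 (ht.2.trans_lt hc'τ)] with y hy
  exact hcc'.trans_le (le_exitTime hc'1 hy)

lemma upperSemicontinuousAt_exitTime_ev {y₀ : C(unitI, ℝ)}
    (hreg : sInf ({t | exitTime a b (ev y₀) < t ∧ t ≤ 1 ∧
        (ev y₀ t < a t ∨ b t < ev y₀ t)} ∪ {1}) = exitTime a b (ev y₀)) :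
    UpperSemicontinuousAt (fun y : C(unitI, ℝ) ↦ exitTime a b (ev y)) y₀ := by
  intro c (hc : exitTime a b (ev y₀) < c)
  rcases lt_or_ge 1 c with hc1 | hc1
  · exact .of_forall fun y ↦ (exitTime_mem_Icc _).2.trans_lt hc1
  rw [← hreg] at hc
  have hbdd : BddBelow ({t | exitTime a b (ev y₀) < t ∧ t ≤ 1 ∧
      (ev y₀ t < a t ∨ b t < ev y₀ t)} ∪ {1}) :=
    ⟨0, by rintro t (⟨ht, -, -⟩ | rfl); exacts [(exitTime_mem_Icc _).1.trans ht.le, zero_le_one]⟩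
  obtain ⟨t, ⟨hτt, ht1, hcross⟩ | rfl, htc⟩ := (csInf_lt_iff hbdd ⟨1, Or.inr rfl⟩).1 hc
  · have hcross' : ∀ᶠ y in 𝓝 y₀, ev y t ≤ a t ∨ b t ≤ ev y t := by
      rcases hcross with h | h
      · exact ((continuous_ev_apply_const t).continuousAt.eventually_lt continuousAt_const
          h).mono fun _ h' ↦ .inl h'.le
      · exact (continuousAt_const.eventually_lt (continuous_ev_apply_const t).continuousAt
          h).mono fun _ h' ↦ .inr h'.le
    filter_upwards [hcross'] with y hy
    exact (exitTime_le_of_mem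
      (Or.inl ⟨⟨(exitTime_mem_Icc _).1.trans hτt.le, ht1⟩, hy⟩)).trans_lt htc
  · exact absurd hc1 htc.not_ge

lemma continuousAt_exitTime_ev (ha : ContinuousOn a (Icc 0 1))
    (hb : ContinuousOn b (Icc 0 1)) {y₀ : C(unitI, ℝ)}
    (hreg : sInf ({t | exitTime a b (ev y₀) < t ∧ t ≤ 1 ∧
        (ev y₀ t < a t ∨ b t < ev y₀ t)} ∪ {1}) = exitTime a b (ev y₀)) :
    ContinuousAt (fun y : C(unitI, ℝ) ↦ exitTime a b (ev y)) y₀ :=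
  continuousAt_iff_lower_upperSemicontinuousAt.2
    ⟨lowerSemicontinuous_exitTime_ev ha hb y₀, upperSemicontinuousAt_exitTime_ev hreg⟩

end ExitTime

lemma argZ_ev_eq_argZAt {m : ℕ} {ν1 ν2 ν3 ν4 : Fin m → ℝ} (hν3 : ∀ i, 0 ≤ ν3 i)
    (hν4 : ∀ i, 0 ≤ ν4 i) (a b : ℝ → ℝ) (y : C(unitI, ℝ)) :
    argZ m a b ν1 ν2 ν3 ν4 (ev y) = argZAt m ν1 ν2 ν3 ν4 (y, exitTime a b (ev y)) := by
  have hτ := (exitTime_mem_Icc (a := a) (b := b) (ev y)).1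
  refine Prod.ext rfl (Prod.ext rfl (Prod.ext ?_ (Prod.ext ?_ rfl))) <;> funext i
  exacts [runMax_eq_sSup_image_mul _ (mul_nonneg hτ (hν3 i)), runMax_eq_sSup_image_mul _ (hν4 i)]

theorem Vh_tendsto_V_general
    {Ω : Type*} [MeasurableSpace Ω] (P : Measure Ω) [IsProbabilityMeasure P]
    [MeasurableSpace C(unitI, ℝ)] [BorelSpace C(unitI, ℝ)]
    (m : ℕ) (ν1 ν2 ν3 ν4 : Fin m → ℝ)
    (hν : ∀ i, ν1 i ∈ Set.Icc (0:ℝ) 1 ∧ ν2 i ∈ Set.Icc (0:ℝ) 1 ∧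
      ν3 i ∈ Set.Icc (0:ℝ) 1 ∧ ν4 i ∈ Set.Icc (0:ℝ) 1)
    (a b : ℝ → ℝ)
    (ha : ContinuousOn a (Set.Icc 0 1)) (hb : ContinuousOn b (Set.Icc 0 1))
    (X : Ω → C(unitI, ℝ)) (hXmeas : Measurable X)
    (Xh : ℝ → Ω → C(unitI, ℝ)) (hXhmeas : ∀ h ∈ Set.Ioi (0:ℝ), Measurable (Xh h))
    -- weak convergence of the laws of `X^h` to the law of `X` as `h → 0⁺`:
    (hweak : ∀ F : C(unitI, ℝ) → ℝ, Continuous F → (∃ M : ℝ, ∀ z, |F z| ≤ M) →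
      Filter.Tendsto (fun h => ∫ ω, F (Xh h ω) ∂P)
        (nhdsWithin 0 (Set.Ioi 0)) (nhds (∫ ω, F (X ω) ∂P)))
    -- (ii) a.s. boundary regularity `inf{ t > τ : X(t) ∉ [α(t), β(t)] } ∧ 1 = τ`:
    (hreg : ∀ᵐ ω ∂P,
      sInf ({t | exitTime a b (ev (X ω)) < t ∧ t ≤ 1 ∧
          (ev (X ω) t < a t ∨ b t < ev (X ω) t)} ∪ {1})
        = exitTime a b (ev (X ω)))
    -- (iii) `g` bounded, Borel measurable, a.s. continuous at `Z`:
    (g : (Fin m → ℝ) × (Fin m → ℝ) × (Fin m → ℝ) × (Fin m → ℝ) × ℝ → ℝ)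
    (hgmeas : Measurable g) (hgbdd : ∃ M : ℝ, ∀ z, |g z| ≤ M)
    (hgcont : P {ω | ¬ ContinuousAt g (argZ m a b ν1 ν2 ν3 ν4 (ev (X ω)))} = 0) :
    Filter.Tendsto
      (fun h => ∫ ω, g (argZ m a b ν1 ν2 ν3 ν4 (ev (Xh h ω))) ∂P)
      (nhdsWithin 0 (Set.Ioi 0))
      (nhds (∫ ω, g (argZ m a b ν1 ν2 ν3 ν4 (ev (X ω))) ∂P)) := by
  obtain ⟨M, hM⟩ := hgbdd
  have hZ := argZ_ev_eq_argZAt (ν1 := ν1) (ν2 := ν2) (fun i ↦ (hν i).2.2.1.1)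
    (fun i ↦ (hν i).2.2.2.1) a b
  have hτ : Measurable fun y : C(unitI, ℝ) ↦ exitTime a b (ev y) :=
    (lowerSemicontinuous_exitTime_ev ha hb).measurable
  have hmeas : Measurable fun y ↦ g (argZ m a b ν1 ν2 ν3 ν4 (ev y)) := by
    simp only [hZ]
    exact hgmeas.comp
      ((continuous_argZAt m ν1 ν2 ν3 ν4).measurable.comp (measurable_id.prodMk hτ))
  have hcont : ∀ᵐ ω ∂P, ContinuousAt (fun y ↦ g (argZ m a b ν1 ν2 ν3 ν4 (ev y))) (X ω) := by
    filter_upwards [ae_iff.2 hgcont, hreg] with ω hg hr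
    simp only [hZ] at hg ⊢
    have hpair : ContinuousAt (fun y ↦ (y, exitTime a b (ev y))) (X ω) :=
      continuousAt_id.prodMk (continuousAt_exitTime_ev ha hb hr)
    exact hg.comp (x := X ω) ((continuous_argZAt m ν1 ν2 ν3 ν4).continuousAt.comp hpair)
  have hL : range (Subtype.val : Ioi (0:ℝ) → ℝ) ∈ 𝓝[>] (0:ℝ) := by
    rw [Subtype.range_coe]
    exact self_mem_nhdsWithin
  refine (tendsto_comap'_iff hL).1 (tendsto_integral_comp_of_ae_continuousAt P
    (fun h : Ioi (0:ℝ) ↦ hXhmeas h h.2) hXmeas (fun F ↦ ?_) hmeas (fun y ↦ hM _) hcont)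
  exact (hweak F F.continuous ⟨‖F‖, fun z ↦ F.norm_coe_le_norm z⟩).comp tendsto_comap

/-- Theorem 2.1 (version for continuous approximating processes): under
(i) a.s. `X(0) ∈ (α(0), β(0))`, (ii) a.s. boundary regularity
`inf{ t > τ : X(t) ∉ [α(t), β(t)] } ∧ 1 = τ`, and (iii) `g` bounded, Borel
measurable and a.s. continuous at `Z`, weak convergence of the laws of
`X^h` to the law of `X` on `C([0,1], ℝ)` implies `V^h → V` as `h → 0⁺`. -/
theorem Vh_tendsto_V
    {Ω : Type*} [MeasurableSpace Ω] (P : Measure Ω) [IsProbabilityMeasure P]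
    [MeasurableSpace C(unitI, ℝ)] [BorelSpace C(unitI, ℝ)]
    (m : ℕ) (ν1 ν2 ν3 ν4 : Fin m → ℝ)
    (hν : ∀ i, ν1 i ∈ Set.Icc (0:ℝ) 1 ∧ ν2 i ∈ Set.Icc (0:ℝ) 1 ∧
      ν3 i ∈ Set.Icc (0:ℝ) 1 ∧ ν4 i ∈ Set.Icc (0:ℝ) 1)
    (a b : ℝ → ℝ)
    (ha : ContinuousOn a (Set.Icc 0 1)) (hb : ContinuousOn b (Set.Icc 0 1))
    (hab : ∀ t ∈ Set.Icc (0:ℝ) 1, a t < b t)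
    (X : Ω → C(unitI, ℝ)) (hXmeas : Measurable X)
    (Xh : ℝ → Ω → C(unitI, ℝ)) (hXhmeas : ∀ h ∈ Set.Ioi (0:ℝ), Measurable (Xh h))
    -- weak convergence of the laws of `X^h` to the law of `X` as `h → 0⁺`:
    (hweak : ∀ F : C(unitI, ℝ) → ℝ, Continuous F → (∃ M : ℝ, ∀ z, |F z| ≤ M) →
      Filter.Tendsto (fun h => ∫ ω, F (Xh h ω) ∂P)
        (nhdsWithin 0 (Set.Ioi 0)) (nhds (∫ ω, F (X ω) ∂P)))
    -- (i) a.s. the initial value lies strictly between the barriers: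
    (hinit : ∀ᵐ ω ∂P, a 0 < ev (X ω) 0 ∧ ev (X ω) 0 < b 0)
    -- (ii) a.s. boundary regularity `inf{ t > τ : X(t) ∉ [α(t), β(t)] } ∧ 1 = τ`:
    (hreg : ∀ᵐ ω ∂P,
      sInf ({t | exitTime a b (ev (X ω)) < t ∧ t ≤ 1 ∧
          (ev (X ω) t < a t ∨ b t < ev (X ω) t)} ∪ {1})
        = exitTime a b (ev (X ω)))
    -- (iii) `g` bounded, Borel measurable, a.s. continuous at `Z`:
    (g : (Fin m → ℝ) × (Fin m → ℝ) × (Fin m → ℝ) × (Fin m → ℝ) × ℝ → ℝ)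
    (hgmeas : Measurable g) (hgbdd : ∃ M : ℝ, ∀ z, |g z| ≤ M)
    (hgcont : P {ω | ¬ ContinuousAt g (argZ m a b ν1 ν2 ν3 ν4 (ev (X ω)))} = 0) :
    Filter.Tendsto
      (fun h => ∫ ω, g (argZ m a b ν1 ν2 ν3 ν4 (ev (Xh h ω))) ∂P)
      (nhdsWithin 0 (Set.Ioi 0))
      (nhds (∫ ω, g (argZ m a b ν1 ν2 ν3 ν4 (ev (X ω))) ∂P)) :=
  Vh_tendsto_V_general P m ν1 ν2 ν3 ν4 hν a b ha hb X hXmeas Xh hXhmeas hweak hreg g hgmeas hgbdd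
    hgcont
end

section
/- (Lemma 3.1, second-moment bound.) Let d, d₁ ∈ ℕ and let b : ℝ^d × [0,1] → ℝ^d and σ : ℝ^d × [0,1] → ℝ^{d×d₁} satisfy, for some K₀, |φ(y₁,t₁) − φ(y₂,t₂)| ≤ K₀(|y₁ − y₂| + |t₁ − t₂|^{1/2}) for φ = b, σ. Fix C ≥ 1 and y ∈ ℝ^d. For each h ∈ (0,1], let (ℱ_n^h)_{n ≥ 0} be a discrete filtration on a probability space, (Y_n^h)_{n ≥ 0} an adapted ℝ^d-valued process with Y_0^h = y, and (Δt_n^h)_{n ≥ 0} nonnegative random variables with Δt_n^h being ℱ_n^h-measurable and h/C ≤ Δt_n^h ≤ C·h almost surely (quasi-uniform steps); set t_n^h = Σ_{i<n} Δt_i^h and assume t_N^h = 1 for the last index N. Assume the generalized local consistency: almost surely, |E[ΔY_n^h | ℱ_n^h] − Δt_n^h · b(Y_n^h, t_n^h)| ≤ C·h·Δt_n^h, and every entry of the conditional covariance matrix Cov(ΔY_n^h | ℱ_n^h) differs from the corresponding entry of Δt_n^h · (σσᵀ)(Y_n^h, t_n^h) by at most C·h·Δt_n^h, where ΔY_n^h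 = Y_{n+1}^h − Y_n^h. Define the piecewise constant interpolation Y^h(t) = Y_{z^h(t)}^h, where z^h(t) = max{ n ≥ 0 : t_n^h ≤ t }. Then there exists a constant K, depending only on K₀, C, d, d₁ and |y| (and not on h or t), such that E[ |Y^h(t)|² ] ≤ K for all t ∈ [0,1] and all h ∈ (0,1]. -/
open Set MeasureTheory Filter Finset

/-- The (random) grid time `t_n = ∑_{i<n} Δt_i`. -/
noncomputable def gridTime {Ω : Type*} (Δt : ℕ → Ω → ℝ) (n : ℕ) (ω : Ω) : ℝ :=
  ∑ i ∈ Finset.range n, Δt i ω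

/-- The index `z(t) = max{ n ≥ 0 : t_n ≤ t }` of the piecewise constant
interpolation. -/
noncomputable def zIdx {Ω : Type*} (Δt : ℕ → Ω → ℝ) (t : ℝ) (ω : Ω) : ℕ :=
  sSup {n : ℕ | gridTime Δt n ω ≤ t}

/-!
Write `R_n = 1 + |Y_n|²` (Euclidean norm) and `M_n = E[ΔY_n | ℱ_n]`. Since `Y_n` and the event
`{t_{n+1} ≤ t} = {n < z(t)}` are `ℱ_n`-measurable, the orthogonality of `ΔY_n - M_n` to `ℱ_n`
gives `E[R_{n+1}; n < z] = E[1 + |Y_n + M_n|² + tr Cov(ΔY_n | ℱ_n); n < z]`. On that event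
`t_n ∈ [0, 1]`, so the coefficients have linear growth there, and local consistency bounds
`|M_n|` by `O(h (1 + |Y_n|))` and the covariance by `O(h (1 + |Y_n|)²)`; hence
`E[R_{n+1}; n < z] ≤ (1 + c h) E[R_n; n < z]`. Summed with the unchanged part `{z ≤ n}`, this gives
`E[R_{z ∧ n}] ≤ (1 + c h)ⁿ R_0`, and `z ≤ N ≤ C / h` turns `(1 + c h)^N` into `exp (c C)`.
-/

section Grid

variable {Ω : Type*} {Δ : ℕ → Ω → ℝ} {ω : Ω} {c t : ℝ}

lemma gridTime_succ (Δ : ℕ → Ω → ℝ) (n : ℕ) (ω : Ω) :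
    gridTime Δ (n + 1) ω = gridTime Δ n ω + Δ n ω :=
  sum_range_succ _ _

lemma natCast_mul_le_gridTime (hΔ : ∀ i, c ≤ Δ i ω) (n : ℕ) : n * c ≤ gridTime Δ n ω := by
  simpa [gridTime] using card_nsmul_le_sum (range n) (Δ · ω) c fun i _ => hΔ i

lemma natCast_mul_le_of_gridTime_eq_one {h C : ℝ} (hC : 0 < C) (hΔ : ∀ i, h / C ≤ Δ i ω)
    {N : ℕ} (hN : gridTime Δ N ω = 1) : N * h ≤ C := by
  have := natCast_mul_le_gridTime hΔ N
  rwa [hN, mul_div_assoc', div_le_one hC] at this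

lemma bddAbove_setOf_gridTime_le (hc : 0 < c) (hΔ : ∀ i, c ≤ Δ i ω) :
    BddAbove {n : ℕ | gridTime Δ n ω ≤ t} := by
  refine ⟨⌈t / c⌉₊, fun n hn => ?_⟩
  have : (n : ℝ) ≤ t / c := (le_div_iff₀ hc).mpr ((natCast_mul_le_gridTime hΔ n).trans hn)
  exact_mod_cast this.trans (Nat.le_ceil _)

lemma lt_zIdx_iff (hc : 0 < c) (hΔ : ∀ i, c ≤ Δ i ω) (ht : 0 ≤ t) {n : ℕ} :
    n < zIdx Δ t ω ↔ gridTime Δ (n + 1) ω ≤ t := by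
  have hne : {n : ℕ | gridTime Δ n ω ≤ t}.Nonempty := ⟨0, by simpa [gridTime] using ht⟩
  refine ⟨fun hn => ?_, fun hn =>
    Nat.lt_of_succ_le (le_csSup (bddAbove_setOf_gridTime_le hc hΔ) hn)⟩
  have hmono : Monotone (gridTime Δ · ω) := fun i j hij =>
    sum_le_sum_of_subset_of_nonneg (range_subset_range.mpr hij) fun k _ _ => hc.le.trans (hΔ k)
  exact (hmono hn).trans (Nat.sSup_mem hne (bddAbove_setOf_gridTime_le hc hΔ))

lemma zIdx_le_of_gridTime_eq_one (hc : 0 < c) (hΔ : ∀ i, c ≤ Δ i ω) (ht : t ∈ Icc (0 : ℝ) 1)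
    {N : ℕ} (hN : gridTime Δ N ω = 1) : zIdx Δ t ω ≤ N := by
  refine not_lt.mp fun hlt => ?_
  have := (lt_zIdx_iff hc hΔ ht.1).mp hlt
  linarith [gridTime_succ Δ N ω, hΔ N, ht.2]

lemma gridTime_mem_Icc_of_succ_le (hΔ : ∀ i, 0 ≤ Δ i ω) {n : ℕ}
    (hn : gridTime Δ (n + 1) ω ≤ 1) : gridTime Δ n ω ∈ Icc (0 : ℝ) 1 :=
  ⟨sum_nonneg fun i _ => hΔ i, by linarith [gridTime_succ Δ n ω, hΔ n]⟩

lemma measurableSet_gridTime_succ_le {F : ℕ → MeasurableSpace Ω} (hF : Monotone F)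
    (hΔ : ∀ i, Measurable[F i] (Δ i)) (t : ℝ) (n : ℕ) :
    MeasurableSet[F n] {ω | gridTime Δ (n + 1) ω ≤ t} :=
  measurableSet_le (Finset.measurable_sum _ fun i hi =>
    (hΔ i).mono (hF (Nat.lt_succ_iff.mp (mem_range.mp hi))) le_rfl) measurable_const

end Grid

lemma exists_norm_le_mul_one_add_norm_of_holder {E F : Type*} [SeminormedAddCommGroup E]
    [SeminormedAddCommGroup F] {K0 : ℝ} {f : E → ℝ → F}
    (hf : ∀ y1 y2 t1 t2, ‖f y1 t1 - f y2 t2‖ ≤ K0 * (‖y1 - y2‖ + |t1 - t2| ^ ((1 : ℝ) / 2))) :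
    ∃ β, 0 ≤ β ∧ ∀ v, ∀ s ∈ Icc (0 : ℝ) 1, ‖f v s‖ ≤ β * (1 + ‖v‖) := by
  have hK0 : 0 ≤ K0 := by simpa using (norm_nonneg _).trans (hf 0 0 1 0)
  refine ⟨‖f 0 0‖ + K0, add_nonneg (norm_nonneg _) hK0, fun v s hs => ?_⟩
  have hs' : |s - 0| ^ ((1 : ℝ) / 2) ≤ 1 := by
    rw [sub_zero, abs_of_nonneg hs.1]
    exact Real.rpow_le_one hs.1 hs.2 (by norm_num)
  have hv := hf v 0 s 0
  rw [sub_zero] at hv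
  have := norm_le_norm_add_norm_sub' (f v s) (f 0 0)
  nlinarith [norm_nonneg v, norm_nonneg (f 0 0)]

lemma norm_le_of_norm_sub_smul_le {E : Type*} [SeminormedAddCommGroup E] [NormedSpace ℝ E]
    {m v : E} {Δ C h β ρ : ℝ} (hm : ‖m - Δ • v‖ ≤ C * h * Δ) (hΔ : 0 ≤ Δ) (hΔC : Δ ≤ C * h)
    (hC : 0 ≤ C) (hh : h ∈ Icc (0 : ℝ) 1) (hρ : 1 ≤ ρ) (hv : ‖v‖ ≤ β * ρ) :
    ‖m‖ ≤ C * (β + C) * h * ρ := by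
  have htri := norm_le_norm_add_norm_sub' m (Δ • v)
  rw [norm_smul, Real.norm_of_nonneg hΔ] at htri
  have hCh : 0 ≤ C * h := mul_nonneg hC hh.1
  have hΔv : Δ * ‖v‖ ≤ C * h * (β * ρ) := mul_le_mul hΔC hv (norm_nonneg v) hCh
  have hΔΔ : C * h * Δ ≤ C * h * (C * ρ) :=
    mul_le_mul_of_nonneg_left (hΔC.trans (by nlinarith [hh.2])) hCh
  nlinarith

lemma sum_mul_self_le_card_mul_sq_norm {n : ℕ} (x : Fin n → ℝ) :
    ∑ j, x j * x j ≤ n * ‖x‖ ^ 2 := by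
  simpa using sum_le_card_nsmul univ (fun j => x j * x j) (‖x‖ ^ 2) fun j _ => by
    rw [← sq, ← sq_abs]
    exact pow_le_pow_left₀ (abs_nonneg _) (norm_le_pi_norm x j) 2

lemma sq_norm_le_sum_sq {n : ℕ} (x : Fin n → ℝ) : ‖x‖ ^ 2 ≤ ∑ k, x k ^ 2 := by
  have hle : ‖x‖ ≤ √(∑ k, x k ^ 2) := (pi_norm_le_iff_of_nonneg (Real.sqrt_nonneg _)).mpr
    fun k => Real.abs_le_sqrt (single_le_sum (f := fun k => x k ^ 2) (fun k _ => sq_nonneg _)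
      (mem_univ k))
  calc ‖x‖ ^ 2 ≤ √(∑ k, x k ^ 2) ^ 2 := pow_le_pow_left₀ (norm_nonneg _) hle 2
    _ = ∑ k, x k ^ 2 := Real.sq_sqrt (sum_nonneg fun k _ => sq_nonneg _)

lemma one_add_sum_add_sq_add_le {d : ℕ} {x m v : Fin d → ℝ} {a e h : ℝ} (ha : 0 ≤ a)
    (he : 0 ≤ e) (hh : h ∈ Icc (0 : ℝ) 1) (hm : ‖m‖ ≤ a * h * (1 + ‖x‖))
    (hv : ∀ k, v k ≤ e * h * (1 + ‖x‖) ^ 2) :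
    1 + ∑ k, ((x k + m k) ^ 2 + v k)
      ≤ (1 + 2 * d * (2 * a + a ^ 2 + e) * h) * (1 + ∑ k, x k ^ 2) := by
  obtain ⟨hh0, hh1⟩ := hh
  set r := ‖x‖
  have hr : 0 ≤ r := norm_nonneg x
  have hcoord : ∀ k, (x k + m k) ^ 2 + v k ≤ x k ^ 2 + (2 * a + a ^ 2 + e) * h * (1 + r) ^ 2 := by
    intro k
    have hxk : |x k| ≤ r := norm_le_pi_norm x k
    have hmk : |m k| ≤ a * h * (1 + r) := (norm_le_pi_norm m k).trans hm
    have hcross : x k * m k ≤ r * (a * h * (1 + r)) :=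
      (le_abs_self _).trans (abs_mul (x k) (m k) ▸ mul_le_mul hxk hmk (abs_nonneg _) hr)
    have hsq : m k ^ 2 ≤ (a * h * (1 + r)) ^ 2 := sq_le_sq' (abs_le.mp hmk).1 (abs_le.mp hmk).2
    have hh2 : h ^ 2 ≤ h := by nlinarith
    have hr1 : r * (a * h * (1 + r)) ≤ a * h * (1 + r) ^ 2 := by
      nlinarith [mul_le_mul_of_nonneg_left (le_add_of_nonneg_left zero_le_one : r ≤ 1 + r)
        (by positivity : 0 ≤ a * h * (1 + r))]
    have hr2 : (a * h * (1 + r)) ^ 2 ≤ a ^ 2 * h * (1 + r) ^ 2 := by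
      nlinarith [mul_le_mul_of_nonneg_left hh2 (mul_nonneg (sq_nonneg a) (sq_nonneg (1 + r)))]
    nlinarith [hv k]
  have hsum : ∑ k, ((x k + m k) ^ 2 + v k)
      ≤ ∑ k, x k ^ 2 + d * ((2 * a + a ^ 2 + e) * h * (1 + r) ^ 2) :=
    (sum_le_sum fun k _ => hcoord k).trans_eq (by simp [sum_add_distrib])
  have hr2 : (1 + r) ^ 2 ≤ 2 * (1 + ∑ k, x k ^ 2) := by
    nlinarith [sq_norm_le_sum_sq x, sq_nonneg (1 - r)]
  have hc : 0 ≤ (d : ℝ) * (2 * a + a ^ 2 + e) * h := by positivity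
  nlinarith [mul_le_mul_of_nonneg_left hr2 hc]

lemma one_add_mul_pow_le_exp {c h C : ℝ} {N : ℕ} (hc : 0 ≤ c) (hh : 0 ≤ h) (hN : N * h ≤ C) :
    (1 + c * h) ^ N ≤ Real.exp (c * C) :=
  calc (1 + c * h) ^ N ≤ Real.exp (c * h) ^ N := by
        gcongr
        linarith [Real.add_one_le_exp (c * h)]
    _ = Real.exp (c * (N * h)) := by rw [← Real.exp_nat_mul]; ring_nf
    _ ≤ Real.exp (c * C) := by gcongr

section CondExp

variable {Ω : Type*} {m : MeasurableSpace Ω} [mΩ : MeasurableSpace Ω] {P : Measure Ω}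
  [IsFiniteMeasure P] {A : Set Ω}

lemma setIntegral_mul_sub_eq_zero_of_ae_eq_condExp (hm : m ≤ mΩ) {Z D M : Ω → ℝ}
    (hZ : StronglyMeasurable[m] Z) (hZ2 : MemLp Z 2 P) (hD2 : MemLp D 2 P)
    (hM : StronglyMeasurable[m] M) (hMD : M =ᵐ[P] P[D|m]) (hA : MeasurableSet[m] A) :
    ∫ ω in A, Z ω * (D ω - M ω) ∂P = 0 := by
  have hM2 : MemLp M 2 P := (hD2.condExp one_le_two).ae_eq hMD.symm
  have hDM : Integrable (D - M) P := (hD2.sub hM2).integrable one_le_two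
  have hcond : P[Z * (D - M)|m] =ᵐ[P] 0 := by
    filter_upwards [condExp_mul_of_stronglyMeasurable_left hZ
      (hZ2.integrable_mul (hD2.sub hM2)) hDM, condExp_sub (hD2.integrable one_le_two)
      (hM2.integrable one_le_two) m, hMD] with ω h1 h2 h3
    rw [h1, Pi.mul_apply, h2, Pi.sub_apply,
      condExp_of_stronglyMeasurable hm hM (hM2.integrable one_le_two), h3, sub_self,
      mul_zero, Pi.zero_apply]
  calc ∫ ω in A, Z ω * (D ω - M ω) ∂P = ∫ ω in A, P[Z * (D - M)|m] ω ∂P :=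
        (setIntegral_condExp hm (hZ2.integrable_mul (hD2.sub hM2)) hA).symm
    _ = 0 := by simpa using setIntegral_congr_ae (hm A hA) (hcond.mono fun ω h _ => h)

lemma setIntegral_add_sq_eq (hm : m ≤ mΩ) {X D M : Ω → ℝ}
    (hX : StronglyMeasurable[m] X) (hX2 : MemLp X 2 P) (hD2 : MemLp D 2 P)
    (hM : StronglyMeasurable[m] M) (hMD : M =ᵐ[P] P[D|m]) (hA : MeasurableSet[m] A) :
    ∫ ω in A, (X ω + D ω) ^ 2 ∂P
      = ∫ ω in A, ((X ω + M ω) ^ 2 + P[fun ω => (D ω - M ω) * (D ω - M ω)|m] ω) ∂P := by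
  have hM2 : MemLp M 2 P := (hD2.condExp one_le_two).ae_eq hMD.symm
  have hXM2 : MemLp (X + M) 2 P := hX2.add hM2
  have hDM2 : MemLp (D - M) 2 P := hD2.sub hM2
  have hcross := setIntegral_mul_sub_eq_zero_of_ae_eq_condExp hm (hX.add hM) hXM2 hD2 hM hMD hA
  simp only [Pi.add_apply] at hcross
  have hvar : ∫ ω in A, P[fun ω => (D ω - M ω) * (D ω - M ω)|m] ω ∂P
      = ∫ ω in A, (D ω - M ω) * (D ω - M ω) ∂P :=
    setIntegral_condExp hm (hDM2.integrable_mul hDM2) hA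
  have hI1 : Integrable (fun ω => (X ω + M ω) ^ 2) P := hXM2.integrable_sq
  have hI2 : Integrable (fun ω => (D ω - M ω) * (D ω - M ω)) P := hDM2.integrable_mul hDM2
  have hI3 : Integrable (fun ω => (X ω + M ω) * (D ω - M ω)) P := hXM2.integrable_mul hDM2
  have hI12 : Integrable (fun ω => (X ω + M ω) ^ 2 + (D ω - M ω) * (D ω - M ω)) P := hI1.add hI2
  have hexpand : ∀ ω, (X ω + D ω) ^ 2
      = ((X ω + M ω) ^ 2 + (D ω - M ω) * (D ω - M ω)) + 2 * ((X ω + M ω) * (D ω - M ω)) :=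
    fun ω => by ring
  simp_rw [hexpand]
  rw [integral_add hI12.integrableOn (hI3.const_mul 2).integrableOn,
    integral_add hI1.integrableOn hI2.integrableOn,
    integral_add hI1.integrableOn integrable_condExp.integrableOn, integral_const_mul, hcross, hvar]
  ring

end CondExp

section Stopping

variable {Ω : Type*} [MeasurableSpace Ω] {P : Measure Ω} {R : ℕ → Ω → ℝ} {z : Ω → ℕ}
  {A : ℕ → Set Ω}

lemma stopped_succ_ae_eq (hAz : ∀ᵐ ω ∂P, ∀ n, ω ∈ A n ↔ n < z ω) (n : ℕ) :
    (fun ω => R (min (z ω) (n + 1)) ω) =ᵐ[P]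
      (A n).indicator (R (n + 1)) + (A n)ᶜ.indicator fun ω => R (min (z ω) n) ω := by
  filter_upwards [hAz] with ω hω
  by_cases hn : n < z ω
  · simp [(hω n).mpr hn, min_eq_right (Nat.succ_le_of_lt hn)]
  · have hz : min (z ω) (n + 1) = min (z ω) n := by omega
    simp [mt (hω n).mp hn, hz]

lemma integrable_stopped (hR : ∀ n, Integrable (R n) P) (hA : ∀ n, MeasurableSet (A n))
    (hAz : ∀ᵐ ω ∂P, ∀ n, ω ∈ A n ↔ n < z ω) (n : ℕ) :
    Integrable (fun ω => R (min (z ω) n) ω) P := by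
  induction n with
  | zero => simpa using hR 0
  | succ n ih =>
    exact (((hR (n + 1)).indicator (hA n)).add (ih.indicator (hA n).compl)).congr
      (stopped_succ_ae_eq hAz n).symm

lemma integral_stopped_le_pow {a : ℝ} (ha : 0 ≤ a) (hR : ∀ n, Integrable (R n) P)
    (hR0 : ∀ n ω, 0 ≤ R n ω) (hA : ∀ n, MeasurableSet (A n))
    (hAz : ∀ᵐ ω ∂P, ∀ n, ω ∈ A n ↔ n < z ω)
    (hstep : ∀ n, ∫ ω in A n, R (n + 1) ω ∂P ≤ (1 + a) * ∫ ω in A n, R n ω ∂P) (n : ℕ) :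
    ∫ ω, R (min (z ω) n) ω ∂P ≤ (1 + a) ^ n * ∫ ω, R 0 ω ∂P := by
  induction n with
  | zero => simp
  | succ n ih =>
    set S : Ω → ℝ := fun ω => R (min (z ω) n) ω
    have hS : Integrable S P := integrable_stopped hR hA hAz n
    have hRS : ∫ ω in A n, R n ω ∂P = ∫ ω in A n, S ω ∂P := by
      refine setIntegral_congr_ae (hA n) ?_
      filter_upwards [hAz] with ω hω hmem
      simp [S, min_eq_right ((hω n).mp hmem).le]
    calc ∫ ω, R (min (z ω) (n + 1)) ω ∂P
        = ∫ ω in A n, R (n + 1) ω ∂P + ∫ ω in (A n)ᶜ, S ω ∂P := by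
          rw [integral_congr_ae (stopped_succ_ae_eq hAz n),
            integral_add' ((hR (n + 1)).indicator (hA n)) (hS.indicator (hA n).compl),
            integral_indicator (hA n), integral_indicator (hA n).compl]
      _ ≤ (1 + a) * ∫ ω in A n, S ω ∂P + (1 + a) * ∫ ω in (A n)ᶜ, S ω ∂P := by
          rw [← hRS]
          exact add_le_add (hstep n) (le_mul_of_one_le_left
            (setIntegral_nonneg (hA n).compl fun ω _ => hR0 _ ω) (by linarith))
      _ = (1 + a) * ∫ ω, S ω ∂P := by rw [← mul_add, integral_add_compl (hA n) hS]
      _ ≤ (1 + a) * ((1 + a) ^ n * ∫ ω, R 0 ω ∂P) := by gcongr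
      _ = (1 + a) ^ (n + 1) * ∫ ω, R 0 ω ∂P := by ring

end Stopping

noncomputable def condIncrMean {Ω : Type*} {m₀ : MeasurableSpace Ω} (P : Measure[m₀] Ω)
    (m : MeasurableSpace Ω) {d : ℕ} (X X' : Ω → Fin d → ℝ) : Ω → Fin d → ℝ :=
  P[fun ω => X' ω - X ω|m]

noncomputable def condIncrCov {Ω : Type*} {m₀ : MeasurableSpace Ω} (P : Measure[m₀] Ω)
    (m : MeasurableSpace Ω) {d : ℕ} (X X' : Ω → Fin d → ℝ) (k l : Fin d) : Ω → ℝ :=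
  P[fun ω => (X' ω k - X ω k - condIncrMean P m X X' ω k)
    * (X' ω l - X ω l - condIncrMean P m X X' ω l)|m]

section OneStep

variable {Ω : Type*} {m : MeasurableSpace Ω} [mΩ : MeasurableSpace Ω] {P : Measure Ω}
  [IsFiniteMeasure P] {d : ℕ} {X X' : Ω → Fin d → ℝ} {A : Set Ω}

lemma setIntegral_sq_apply_eq (hm : m ≤ mΩ) (hX : StronglyMeasurable[m] X) (hX2 : MemLp X 2 P)
    (hX'2 : MemLp X' 2 P) (hA : MeasurableSet[m] A) (k : Fin d) :
    ∫ ω in A, X' ω k ^ 2 ∂P = ∫ ω in A,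
      ((X ω k + condIncrMean P m X X' ω k) ^ 2 + condIncrCov P m X X' k k ω) ∂P := by
  have hMk : (fun ω => condIncrMean P m X X' ω k) =ᵐ[P] P[fun ω => X' ω k - X ω k|m] :=
    (ContinuousLinearMap.proj (R := ℝ) (φ := fun _ : Fin d => ℝ) k).comp_condExp_comm
      ((hX'2.sub hX2).integrable one_le_two)
  simpa [condIncrCov] using setIntegral_add_sq_eq hm
    ((continuous_apply k).comp_stronglyMeasurable hX) (hX2.eval k) ((hX'2.sub hX2).eval k)
    ((continuous_apply k).comp_stronglyMeasurable stronglyMeasurable_condExp) hMk hA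

lemma setIntegral_one_add_sum_sq_succ_le (hm : m ≤ mΩ) (hX : StronglyMeasurable[m] X)
    (hX2 : MemLp X 2 P) (hX'2 : MemLp X' 2 P) (hA : MeasurableSet[m] A) {a e h : ℝ}
    (ha : 0 ≤ a) (he : 0 ≤ e) (hh : h ∈ Icc (0 : ℝ) 1)
    (hM : ∀ᵐ ω ∂P, ω ∈ A → ‖condIncrMean P m X X' ω‖ ≤ a * h * (1 + ‖X ω‖))
    (hV : ∀ᵐ ω ∂P, ω ∈ A → ∀ k, condIncrCov P m X X' k k ω ≤ e * h * (1 + ‖X ω‖) ^ 2) :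
    ∫ ω in A, (1 + ∑ k, X' ω k ^ 2) ∂P
      ≤ (1 + 2 * d * (2 * a + a ^ 2 + e) * h) * ∫ ω in A, (1 + ∑ k, X ω k ^ 2) ∂P := by
  have hM2 : MemLp (condIncrMean P m X X') 2 P := (hX'2.sub hX2).condExp one_le_two
  have hI : ∀ k, IntegrableOn (fun ω => (X ω k + condIncrMean P m X X' ω k) ^ 2
      + condIncrCov P m X X' k k ω) A P := fun k =>
    (((hX2.eval k).add (hM2.eval k)).integrable_sq.add integrable_condExp).integrableOn
  have hsplit : ∫ ω in A, (1 + ∑ k, X' ω k ^ 2) ∂P = ∫ ω in A, (1 + ∑ k,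
      ((X ω k + condIncrMean P m X X' ω k) ^ 2 + condIncrCov P m X X' k k ω)) ∂P := by
    rw [integral_add (integrable_const _) (integrable_finsetSum _ fun k _ =>
        ((hX'2.eval k).integrable_sq).integrableOn),
      integral_add (integrable_const _) (integrable_finsetSum _ fun k _ => hI k),
      integral_finsetSum _ fun k _ => ((hX'2.eval k).integrable_sq).integrableOn,
      integral_finsetSum _ fun k _ => hI k]
    exact congrArg _ (sum_congr rfl fun k _ => setIntegral_sq_apply_eq hm hX hX2 hX'2 hA k)
  rw [hsplit, ← integral_const_mul]
  refine setIntegral_mono_ae_restrict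
    ((integrable_const _).add (integrable_finsetSum _ fun k _ => hI k))
    (((integrable_const _).add (integrable_finsetSum _ fun k _ =>
      ((hX2.eval k).integrable_sq).integrableOn)).const_mul _) ?_
  rw [EventuallyLE, ae_restrict_iff' (hm A hA)]
  filter_upwards [hM, hV] with ω hMω hVω hω
  exact one_add_sum_add_sq_add_le ha he hh (hMω hω) (hVω hω)

end OneStep

section Scheme

variable {Ω : Type*} [mΩ : MeasurableSpace Ω] {P : Measure Ω} {d : ℕ} {F : ℕ → MeasurableSpace Ω}
  {Y : ℕ → Ω → Fin d → ℝ} {Δ : ℕ → Ω → ℝ} {C h t : ℝ}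

lemma integral_sq_norm_stopped_le [IsFiniteMeasure P] {A : ℕ → Set Ω} {z : Ω → ℕ}
    {a e : ℝ} {N : ℕ} (hF : ∀ n, F n ≤ mΩ) (hY : ∀ n, StronglyMeasurable[F n] (Y n))
    (hY2 : ∀ n, MemLp (Y n) 2 P) (hA : ∀ n, MeasurableSet[F n] (A n))
    (hAz : ∀ᵐ ω ∂P, ∀ n, ω ∈ A n ↔ n < z ω) (hzN : ∀ᵐ ω ∂P, z ω ≤ N)
    (ha : 0 ≤ a) (he : 0 ≤ e) (hh : h ∈ Icc (0 : ℝ) 1)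
    (hM : ∀ n, ∀ᵐ ω ∂P, ω ∈ A n →
      ‖condIncrMean P (F n) (Y n) (Y (n + 1)) ω‖ ≤ a * h * (1 + ‖Y n ω‖))
    (hV : ∀ n, ∀ᵐ ω ∂P, ω ∈ A n → ∀ k,
      condIncrCov P (F n) (Y n) (Y (n + 1)) k k ω ≤ e * h * (1 + ‖Y n ω‖) ^ 2) :
    ∫ ω, ‖Y (z ω) ω‖ ^ 2 ∂P
      ≤ (1 + 2 * d * (2 * a + a ^ 2 + e) * h) ^ N * ∫ ω, (1 + ∑ k, Y 0 ω k ^ 2) ∂P := by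
  set R : ℕ → Ω → ℝ := fun n ω => 1 + ∑ k, Y n ω k ^ 2
  have hR : ∀ n, Integrable (R n) P := fun n => (integrable_const 1).add
    (integrable_finsetSum _ fun k _ => ((hY2 n).eval k).integrable_sq)
  have hA' : ∀ n, MeasurableSet (A n) := fun n => hF n _ (hA n)
  calc ∫ ω, ‖Y (z ω) ω‖ ^ 2 ∂P ≤ ∫ ω, R (min (z ω) N) ω ∂P := by
        refine integral_mono_of_nonneg (ae_of_all _ fun ω => sq_nonneg _)
          (integrable_stopped hR hA' hAz N) ?_
        filter_upwards [hzN] with ω hω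
        rw [min_eq_left hω]
        linarith [sq_norm_le_sum_sq (Y (z ω) ω)]
    _ ≤ _ := by
        have hh0 := hh.1
        exact integral_stopped_le_pow (by positivity) hR (fun n ω => by positivity) hA' hAz
          (fun n => setIntegral_one_add_sum_sq_succ_le (hF n) (hY n) (hY2 n) (hY2 (n + 1)) (hA n)
            ha he hh (hM n) (hV n)) N

lemma ae_norm_condIncrMean_le {b : (Fin d → ℝ) → ℝ → (Fin d → ℝ)} {β : ℝ} (hC : 0 ≤ C)
    (hh : h ∈ Icc (0 : ℝ) 1) (ht : t ≤ 1)
    (hb : ∀ v, ∀ s ∈ Icc (0 : ℝ) 1, ‖b v s‖ ≤ β * (1 + ‖v‖))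
    (hΔ : ∀ᵐ ω ∂P, ∀ i, h / C ≤ Δ i ω ∧ Δ i ω ≤ C * h) {n : ℕ}
    (hdrift : ∀ᵐ ω ∂P, ‖condIncrMean P (F n) (Y n) (Y (n + 1)) ω
      - Δ n ω • b (Y n ω) (gridTime Δ n ω)‖ ≤ C * h * Δ n ω) :
    ∀ᵐ ω ∂P, ω ∈ {ω | gridTime Δ (n + 1) ω ≤ t} →
      ‖condIncrMean P (F n) (Y n) (Y (n + 1)) ω‖ ≤ C * (β + C) * h * (1 + ‖Y n ω‖) := by
  filter_upwards [hΔ, hdrift] with ω hΔω hdr hn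
  have hΔ0 : ∀ i, 0 ≤ Δ i ω := fun i => (div_nonneg hh.1 hC).trans (hΔω i).1
  exact norm_le_of_norm_sub_smul_le hdr (hΔ0 n) (hΔω n).2 hC hh
    (le_add_of_nonneg_right (norm_nonneg _))
    (hb _ _ (gridTime_mem_Icc_of_succ_le hΔ0 (hn.trans ht)))

lemma ae_condIncrCov_le {d1 : ℕ} {σ : (Fin d → ℝ) → ℝ → (Fin d → Fin d1 → ℝ)} {s : ℝ}
    (hC : 0 ≤ C) (hh : h ∈ Icc (0 : ℝ) 1) (ht : t ≤ 1)
    (hσ : ∀ v, ∀ r ∈ Icc (0 : ℝ) 1, ‖σ v r‖ ≤ s * (1 + ‖v‖))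
    (hΔ : ∀ᵐ ω ∂P, ∀ i, h / C ≤ Δ i ω ∧ Δ i ω ≤ C * h) {n : ℕ}
    (hcov : ∀ k, ∀ᵐ ω ∂P, |condIncrCov P (F n) (Y n) (Y (n + 1)) k k ω
      - Δ n ω * ∑ j, σ (Y n ω) (gridTime Δ n ω) k j * σ (Y n ω) (gridTime Δ n ω) k j|
        ≤ C * h * Δ n ω) :
    ∀ᵐ ω ∂P, ω ∈ {ω | gridTime Δ (n + 1) ω ≤ t} → ∀ k,
      condIncrCov P (F n) (Y n) (Y (n + 1)) k k ω
        ≤ C * (d1 * s ^ 2 + C) * h * (1 + ‖Y n ω‖) ^ 2 := by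
  filter_upwards [hΔ, ae_all_iff.mpr hcov] with ω hΔω hcv hn k
  have hΔ0 : ∀ i, 0 ≤ Δ i ω := fun i => (div_nonneg hh.1 hC).trans (hΔω i).1
  set σn := σ (Y n ω) (gridTime Δ n ω)
  have hS : ‖∑ j, σn k j * σn k j‖ ≤ d1 * s ^ 2 * (1 + ‖Y n ω‖) ^ 2 := by
    rw [Real.norm_of_nonneg (sum_nonneg fun j _ => mul_self_nonneg _)]
    calc ∑ j, σn k j * σn k j ≤ d1 * ‖σn k‖ ^ 2 := sum_mul_self_le_card_mul_sq_norm _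
      _ ≤ d1 * (s * (1 + ‖Y n ω‖)) ^ 2 := by
        gcongr
        exact (norm_le_pi_norm σn k).trans
          (hσ _ _ (gridTime_mem_Icc_of_succ_le hΔ0 (hn.trans ht)))
      _ = d1 * s ^ 2 * (1 + ‖Y n ω‖) ^ 2 := by ring
  exact (le_abs_self _).trans (norm_le_of_norm_sub_smul_le (E := ℝ) (hcv k) (hΔ0 n) (hΔω n).2
    hC hh (one_le_pow₀ (le_add_of_nonneg_right (norm_nonneg _))) hS)

end Scheme

/-- Lemma 3.1, second-moment bound: under Lipschitz/Hölder-1/2 regularity of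
the coefficients, quasi-uniform predictable steps and generalized local
consistency, the piecewise constant interpolation `Y^h(t) = Y_{z^h(t)}^h`
satisfies `E[ |Y^h(t)|² ] ≤ K` for all `t ∈ [0,1]`, `h ∈ (0,1]`, with `K`
independent of `h` and `t`. -/
theorem secondMoment_bound
    (d d1 : ℕ) (K0 C : ℝ) (hC : 1 ≤ C)
    (b : (Fin d → ℝ) → ℝ → (Fin d → ℝ))
    (σ : (Fin d → ℝ) → ℝ → (Fin d → Fin d1 → ℝ))
    (hb : ∀ (y1 y2 : Fin d → ℝ) (t1 t2 : ℝ),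
      ‖b y1 t1 - b y2 t2‖ ≤ K0 * (‖y1 - y2‖ + |t1 - t2| ^ ((1:ℝ)/2)))
    (hσ : ∀ (y1 y2 : Fin d → ℝ) (t1 t2 : ℝ),
      ‖σ y1 t1 - σ y2 t2‖ ≤ K0 * (‖y1 - y2‖ + |t1 - t2| ^ ((1:ℝ)/2)))
    (y : Fin d → ℝ)
    {Ω : Type*} [mΩ : MeasurableSpace Ω] (P : Measure Ω) [IsProbabilityMeasure P]
    (F : ℝ → ℕ → MeasurableSpace Ω)
    (Y : ℝ → ℕ → Ω → (Fin d → ℝ))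
    (Δt : ℝ → ℕ → Ω → ℝ)
    -- `(ℱ_n^h)` is a discrete filtration:
    (hfilt : ∀ h ∈ Set.Ioc (0:ℝ) 1, Monotone (F h) ∧ ∀ n, F h n ≤ mΩ)
    -- `(Y_n^h)` is adapted, square integrable, and starts at `y`:
    (hadapt : ∀ h ∈ Set.Ioc (0:ℝ) 1, ∀ n, Measurable[F h n] (Y h n))
    (hL2 : ∀ h ∈ Set.Ioc (0:ℝ) 1, ∀ n, MemLp (Y h n) 2 P)
    (hY0 : ∀ h ∈ Set.Ioc (0:ℝ) 1, ∀ ω, Y h 0 ω = y)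
    -- predictable quasi-uniform steps `h/C ≤ Δt_n^h ≤ C·h`:
    (hstepmeas : ∀ h ∈ Set.Ioc (0:ℝ) 1, ∀ n, Measurable[F h n] (Δt h n))
    (hstep : ∀ h ∈ Set.Ioc (0:ℝ) 1, ∀ n, ∀ᵐ ω ∂P,
      h / C ≤ Δt h n ω ∧ Δt h n ω ≤ C * h)
    -- the grid reaches time `1` at the last index `N`:
    (hterm : ∀ h ∈ Set.Ioc (0:ℝ) 1, ∃ N : ℕ, ∀ᵐ ω ∂P, gridTime (Δt h) N ω = 1)
    -- generalized local consistency, drift part (LC1):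
    (hdrift : ∀ h ∈ Set.Ioc (0:ℝ) 1, ∀ n, ∀ᵐ ω ∂P,
      ‖(P[(fun ω' => Y h (n+1) ω' - Y h n ω') | F h n]) ω
        - Δt h n ω • b (Y h n ω) (gridTime (Δt h) n ω)‖ ≤ C * h * Δt h n ω)
    -- generalized local consistency, covariance part (LC2), entrywise:
    (hcov : ∀ h ∈ Set.Ioc (0:ℝ) 1, ∀ n, ∀ k l : Fin d, ∀ᵐ ω ∂P,
      |(P[(fun ω' =>
            (Y h (n+1) ω' k - Y h n ω' k
              - (P[(fun ω'' => Y h (n+1) ω'' - Y h n ω'') | F h n]) ω' k) *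
            (Y h (n+1) ω' l - Y h n ω' l
              - (P[(fun ω'' => Y h (n+1) ω'' - Y h n ω'') | F h n]) ω' l))
          | F h n]) ω
        - Δt h n ω * (∑ j, σ (Y h n ω) (gridTime (Δt h) n ω) k j
              * σ (Y h n ω) (gridTime (Δt h) n ω) l j)|
        ≤ C * h * Δt h n ω) :
    ∃ K : ℝ, ∀ h ∈ Set.Ioc (0:ℝ) 1, ∀ t ∈ Set.Icc (0:ℝ) 1,
      (∫ ω, ‖Y h (zIdx (Δt h) t ω) ω‖ ^ 2 ∂P) ≤ K := by
  have hC0 : 0 < C := zero_lt_one.trans_le hC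
  obtain ⟨β, hβ, hbβ⟩ := exists_norm_le_mul_one_add_norm_of_holder hb
  obtain ⟨s, -, hσs⟩ := exists_norm_le_mul_one_add_norm_of_holder hσ
  have ha : 0 ≤ C * (β + C) := by positivity
  have he : 0 ≤ C * (d1 * s ^ 2 + C) := by positivity
  set c := 2 * d * (2 * (C * (β + C)) + (C * (β + C)) ^ 2 + C * (d1 * s ^ 2 + C))
  refine ⟨(1 + ∑ k, y k ^ 2) * Real.exp (c * C), fun h hh t ht => ?_⟩
  obtain ⟨N, hN⟩ := hterm h hh
  have hsteps := ae_all_iff.mpr (hstep h hh)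
  have hhC : 0 < h / C := div_pos hh.1 hC0
  obtain ⟨ω₀, hsteps₀, hN₀⟩ := (hsteps.and hN).exists
  have hh' : h ∈ Icc (0 : ℝ) 1 := Ioc_subset_Icc_self hh
  have hmoment := integral_sq_norm_stopped_le (N := N) (hfilt h hh).2
    (fun n => (hadapt h hh n).stronglyMeasurable) (hL2 h hh)
    (measurableSet_gridTime_succ_le (hfilt h hh).1 (hstepmeas h hh) t)
    (by filter_upwards [hsteps] with ω hω n
        exact (lt_zIdx_iff hhC (fun i => (hω i).1) ht.1).symm)
    (by filter_upwards [hsteps, hN] with ω hω hNω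
        exact zIdx_le_of_gridTime_eq_one hhC (fun i => (hω i).1) ht hNω)
    ha he hh'
    (fun n => ae_norm_condIncrMean_le hC0.le hh' ht.2 hbβ hsteps (hdrift h hh n))
    (fun n => ae_condIncrCov_le hC0.le hh' ht.2 hσs hsteps fun k => hcov h hh n k k)
  calc ∫ ω, ‖Y h (zIdx (Δt h) t ω) ω‖ ^ 2 ∂P ≤ (1 + c * h) ^ N * (1 + ∑ k, y k ^ 2) := by
        simpa [hY0 h hh] using hmoment
    _ ≤ Real.exp (c * C) * (1 + ∑ k, y k ^ 2) := by
        gcongr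
        exact one_add_mul_pow_le_exp (by positivity) hh'.1
          (natCast_mul_le_of_gridTime_eq_one hC0 (fun i => (hsteps₀ i).1) hN₀)
    _ = (1 + ∑ k, y k ^ 2) * Real.exp (c * C) := mul_comm _ _
end

section
/- Let (W_t)_{t ≥ 0} be a standard one-dimensional Brownian motion. Then √N · E[ sup_{0 ≤ t ≤ 1} | W_t − W_{⌊Nt⌋/N} | ] → ∞ as N → ∞. In particular, there is no constant K such that E[ sup_{0 ≤ t ≤ 1} | W_t − W_{⌊Nt⌋/N} | ] ≤ K · N^{-1/2} for all N ≥ 1; i.e. the piecewise constant (Euler) interpolation of Brownian motion does not converge strongly at rate N^{-1/2} in the uniform norm. -/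
open MeasureTheory ProbabilityTheory Filter Set

/-- `W` is a standard one-dimensional Brownian motion on the probability
space `(Ω, P)`: `W_0 = 0`, continuous sample paths on `[0, ∞)`, increments
`W_t − W_s ~ N(0, t − s)` for `0 ≤ s ≤ t`, and independent increments. -/
def IsStdBM {Ω : Type*} [MeasurableSpace Ω] (P : Measure Ω)
    (W : ℝ → Ω → ℝ) : Prop :=
  (∀ t, Measurable (W t)) ∧
  (∀ ω, W 0 ω = 0) ∧
  (∀ ω, ContinuousOn (fun t => W t ω) (Set.Ici 0)) ∧
  (∀ s t : ℝ, 0 ≤ s → s ≤ t →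
    Measure.map (fun ω => W t ω - W s ω) P
      = gaussianReal 0 (Real.toNNReal (t - s))) ∧
  (∀ (n : ℕ) (ts : Fin (n + 1) → ℝ), (∀ i, 0 ≤ ts i) → Monotone ts →
    iIndepFun
      (fun i : Fin n => fun ω => W (ts i.succ) ω - W (ts i.castSucc) ω) P)

/-- `E[ sup_{0 ≤ t ≤ 1} |W_t − W_{⌊Nt⌋/N}| ]`, as a Lebesgue integral in
`[0, ∞]`. -/
noncomputable def eulerErr {Ω : Type*} [MeasurableSpace Ω] (P : Measure Ω)
    (W : ℝ → Ω → ℝ) (N : ℕ) : ENNReal :=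
  ∫⁻ ω, ENNReal.ofReal
    (sSup ((fun t => |W t ω - W (↑⌊(N : ℝ) * t⌋ / (N : ℝ)) ω|) ''
      Set.Icc (0:ℝ) 1)) ∂P


/-! On the block `[k/N, (k+1)/N)` the interpolation error is `|W_t − W_{k/N}|`, which tends
to the increment `|W_{(k+1)/N} − W_{k/N}|` as `t ↑ (k+1)/N`; so the supremum dominates the
largest of `N` independent `N(0, 1/N)` increments. For `a = √(log N)` the Gaussian tail satisfies
`P(Z ≥ a) ≥ φ(a + 1) ≥ κ / N` with `κ = e⁻¹ / √(2π)`, so with probability at least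
`1 − (1 − κ/N)^N ≥ 1 − e^{−κ}` some increment exceeds `a / √N`. Hence
`√N · E[sup] ≥ (1 − e^{−κ}) √(log N) → ∞`. -/

open Real Topology
open scoped NNReal ENNReal

lemma gaussianReal_Ici_sqrt_mul {v : ℝ≥0} (hv : v ≠ 0) (a : ℝ) :
    gaussianReal 0 v (Ici (√v * a)) = gaussianReal 0 1 (Ici a) := by
  have hσ : 0 < √(v : ℝ) := sqrt_pos.2 (by positivity)
  have hmap := gaussianReal_map_const_mul (μ := 0) (v := 1) √(v : ℝ)
  have hvar : NNReal.mk (√(v : ℝ) ^ 2) (sq_nonneg _) = v := NNReal.eq (sq_sqrt v.2)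
  rw [mul_zero, mul_one, hvar] at hmap
  rw [← hmap, Measure.map_apply (measurable_const_mul _) measurableSet_Ici]
  congr 1
  ext x
  simp [mul_le_mul_iff_right₀ hσ]

lemma antitoneOn_gaussianPDFReal_zero_Ici (v : ℝ≥0) :
    AntitoneOn (gaussianPDFReal 0 v) (Ici 0) := by
  intro x hx y _ hxy
  simp only [gaussianPDFReal, sub_zero]
  gcongr

lemma ofReal_gaussianPDFReal_add_one_le_gaussianReal_Ici {a : ℝ} (ha : 0 ≤ a) :
    ENNReal.ofReal (gaussianPDFReal 0 1 (a + 1)) ≤ gaussianReal 0 1 (Ici a) := by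
  calc ENNReal.ofReal (gaussianPDFReal 0 1 (a + 1))
      = ∫⁻ _ in Icc a (a + 1), ENNReal.ofReal (gaussianPDFReal 0 1 (a + 1)) := by
        simp [Real.volume_Icc]
    _ ≤ ∫⁻ x in Icc a (a + 1), gaussianPDF 0 1 x :=
        setLIntegral_mono' measurableSet_Icc fun x hx => ENNReal.ofReal_le_ofReal <|
          antitoneOn_gaussianPDFReal_zero_Ici 1 (ha.trans hx.1 : 0 ≤ x)
            (show (0 : ℝ) ≤ a + 1 by linarith) hx.2
    _ ≤ ∫⁻ x in Ici a, gaussianPDF 0 1 x := lintegral_mono_set Icc_subset_Ici_self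
    _ = gaussianReal 0 1 (Ici a) := (gaussianReal_apply 0 one_ne_zero _).symm

lemma ofReal_div_le_gaussianReal_Ici_sqrt_log {N : ℕ} (hN : 1 ≤ N) :
    ENNReal.ofReal (exp (-1) / √(2 * π) / N) ≤ gaussianReal 0 1 (Ici √(log N)) := by
  have hN0 : (0 : ℝ) < N := by exact_mod_cast hN
  have hlog : 0 ≤ log N := log_nonneg (by exact_mod_cast hN)
  refine le_trans (ENNReal.ofReal_le_ofReal ?_)
    (ofReal_gaussianPDFReal_add_one_le_gaussianReal_Ici (sqrt_nonneg _))
  have hsq : (√(log N) + 1) ^ 2 / 2 ≤ log N + 1 := by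
    nlinarith [sq_sqrt hlog, sq_nonneg (√(log N) - 1)]
  calc exp (-1) / √(2 * π) / N = (√(2 * π))⁻¹ * exp (-(log N + 1)) := by
        rw [neg_add, exp_add, exp_neg (log N), exp_log hN0]; field_simp
    _ ≤ gaussianPDFReal 0 1 (√(log N) + 1) := by
        simp only [gaussianPDFReal, NNReal.coe_one, mul_one, sub_zero]
        gcongr
        linarith [neg_div 2 ((√(log N) + 1) ^ 2)]

lemma one_sub_gaussianReal_Ici_sqrt_log_pow_le {N : ℕ} (hN : 1 ≤ N) :
    (1 - gaussianReal 0 1 (Ici √(log N))) ^ N ≤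
      ENNReal.ofReal (exp (-(exp (-1) / √(2 * π)))) := by
  set κ := exp (-1) / √(2 * π)
  have hκN : κ ≤ N := by
    have h2π : 1 ≤ √(2 * π) := one_le_sqrt.2 (by linarith [pi_gt_three])
    calc κ ≤ 1 :=
          div_le_one_of_le₀ (h2π.trans' (exp_le_one_iff.2 (by norm_num))) (by positivity)
      _ ≤ N := by exact_mod_cast hN
  calc (1 - gaussianReal 0 1 (Ici √(log N))) ^ N ≤ (1 - ENNReal.ofReal (κ / N)) ^ N := by
        exact pow_le_pow_left₀ zero_le
          (tsub_le_tsub_left (ofReal_div_le_gaussianReal_Ici_sqrt_log hN) 1) N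
    _ = ENNReal.ofReal ((1 - κ / N) ^ N) := by
        rw [ENNReal.ofReal_pow (sub_nonneg.2 (div_le_one_of_le₀ hκN N.cast_nonneg)),
          ENNReal.ofReal_sub _ (by positivity), ENNReal.ofReal_one]
    _ ≤ ENNReal.ofReal (exp (-κ)) := ENNReal.ofReal_le_ofReal (one_sub_div_pow_le_exp_neg hκN)

lemma floor_mul_div_mem_Icc {N : ℕ} {t : ℝ} (ht : t ∈ Icc (0 : ℝ) 1) :
    (⌊(N : ℝ) * t⌋ : ℝ) / N ∈ Icc (0 : ℝ) 1 := by
  have hNt : 0 ≤ (N : ℝ) * t := mul_nonneg N.cast_nonneg ht.1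
  refine ⟨div_nonneg (by exact_mod_cast Int.floor_nonneg.2 hNt) N.cast_nonneg,
    div_le_one_of_le₀ ?_ N.cast_nonneg⟩
  calc (⌊(N : ℝ) * t⌋ : ℝ) ≤ N * t := Int.floor_le _
    _ ≤ N := mul_le_of_le_one_right N.cast_nonneg ht.2

lemma floor_mul_eq_of_mem_Ico {N k : ℕ} (hN : 0 < N) {t : ℝ}
    (ht : t ∈ Ico ((k : ℝ) / N) ((k + 1) / N)) : ⌊(N : ℝ) * t⌋ = k := by
  have hN' : (0 : ℝ) < N := by exact_mod_cast hN
  rw [Int.floor_eq_iff]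
  constructor
  · have := (div_le_iff₀ hN').1 ht.1
    push_cast; linarith
  · have := (lt_div_iff₀ hN').1 ht.2
    push_cast; linarith

lemma bddAbove_abs_sub_floor {f : ℝ → ℝ} (hf : ContinuousOn f (Icc 0 1)) (N : ℕ) :
    BddAbove ((fun t => |f t - f (⌊(N : ℝ) * t⌋ / N)|) '' Icc (0 : ℝ) 1) := by
  obtain ⟨C, hC⟩ := isCompact_Icc.exists_bound_of_continuousOn hf
  refine ⟨C + C, ?_⟩
  rintro _ ⟨t, ht, rfl⟩
  exact (abs_sub _ _).trans (add_le_add (hC t ht) (hC _ (floor_mul_div_mem_Icc ht)))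

lemma abs_sub_le_sSup_abs_sub_floor {f : ℝ → ℝ} (hf : ContinuousOn f (Icc 0 1)) {N k : ℕ}
    (hk : k < N) :
    |f ((k + 1) / N) - f (k / N)| ≤
      sSup ((fun t => |f t - f (⌊(N : ℝ) * t⌋ / N)|) '' Icc (0 : ℝ) 1) := by
  have hN : (0 : ℝ) < N := by exact_mod_cast (k.zero_le.trans_lt hk)
  have hlt : (k : ℝ) / N < (k + 1) / N := by gcongr; linarith
  have hle : ((k : ℝ) + 1) / N ≤ 1 := div_le_one_of_le₀ (by exact_mod_cast hk) hN.le
  have hsub : Ico ((k : ℝ) / N) ((k + 1) / N) ⊆ Icc 0 1 := fun t ht =>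
    ⟨(by positivity : (0 : ℝ) ≤ k / N).trans ht.1, ht.2.le.trans hle⟩
  have := right_nhdsWithin_Ico_neBot hlt
  have hcont : ContinuousWithinAt (fun t => |f t - f (k / N)|)
      (Ico ((k : ℝ) / N) ((k + 1) / N)) ((k + 1) / N) :=
    (((hf _ ⟨by positivity, hle⟩).mono hsub).sub continuousWithinAt_const).abs
  refine le_of_tendsto hcont (eventually_nhdsWithin_of_forall fun t ht => ?_)
  refine le_csSup (bddAbove_abs_sub_floor hf N) ⟨t, hsub ht, ?_⟩
  simp only [floor_mul_eq_of_mem_Ico (k.zero_le.trans_lt hk) ht, Int.cast_natCast]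

noncomputable def gridIncrement {Ω : Type*} (W : ℝ → Ω → ℝ) (N k : ℕ) (ω : Ω) : ℝ :=
  W ((k + 1) / N) ω - W (k / N) ω

namespace IsStdBM

variable {Ω : Type*} [MeasurableSpace Ω] {P : Measure Ω} {W : ℝ → Ω → ℝ}

lemma measurable_gridIncrement (hW : IsStdBM P W) (N k : ℕ) :
    Measurable (gridIncrement W N k) :=
  (hW.1 _).sub (hW.1 _)

lemma iIndepFun_gridIncrement (hW : IsStdBM P W) (N : ℕ) :
    iIndepFun (fun k : Fin N => gridIncrement W N k) P := by
  have hmono : Monotone fun i : Fin (N + 1) => ((i : ℕ) : ℝ) / N := fun i j hij =>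
    div_le_div_of_nonneg_right (by exact_mod_cast hij) N.cast_nonneg
  have h := hW.2.2.2.2 N (fun i => ((i : ℕ) : ℝ) / N) (fun i => by positivity) hmono
  simp only [Fin.val_succ, Fin.val_castSucc, Nat.cast_add, Nat.cast_one] at h
  exact h

lemma measure_le_gridIncrement (hW : IsStdBM P W) {N : ℕ} (hN : N ≠ 0) (k : ℕ) (a : ℝ) :
    P {ω | a / √N ≤ gridIncrement W N k ω} = gaussianReal 0 1 (Ici a) := by
  have hlaw : P.map (gridIncrement W N k) = gaussianReal 0 (Real.toNNReal (1 / N)) := by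
    rw [show (1 : ℝ) / N = (k + 1) / N - k / N by ring]
    exact hW.2.2.2.1 (k / N) ((k + 1) / N) (by positivity)
      (div_le_div_of_nonneg_right (by linarith) N.cast_nonneg)
  have hv : Real.toNNReal (1 / N) ≠ 0 := by simpa using hN
  change P (gridIncrement W N k ⁻¹' Ici (a / √N)) = _
  rw [← Measure.map_apply (hW.measurable_gridIncrement N k) measurableSet_Ici, hlaw,
    ← gaussianReal_Ici_sqrt_mul hv a]
  congr 2
  rw [Real.coe_toNNReal _ (by positivity), sqrt_div' 1 N.cast_nonneg, sqrt_one]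
  ring

lemma measure_exists_le_gridIncrement [IsProbabilityMeasure P] (hW : IsStdBM P W) {N : ℕ}
    (hN : N ≠ 0) (a : ℝ) :
    P {ω | ∃ k : Fin N, a / √N ≤ gridIncrement W N k ω} =
      1 - (1 - gaussianReal 0 1 (Ici a)) ^ N := by
  have hsmall : {ω | ∃ k : Fin N, a / √N ≤ gridIncrement W N k ω}ᶜ =
      ⋂ k ∈ (Finset.univ : Finset (Fin N)), gridIncrement W N k ⁻¹' Iio (a / √N) := by
    ext ω; simp
  have hsmall_k (k : ℕ) :
      P (gridIncrement W N k ⁻¹' Iio (a / √N)) = 1 - gaussianReal 0 1 (Ici a) := by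
    rw [← compl_Ici, preimage_compl,
      prob_compl_eq_one_sub (hW.measurable_gridIncrement N k measurableSet_Ici)]
    exact congrArg (1 - ·) (hW.measure_le_gridIncrement hN k a)
  rw [← compl_compl {ω | _}, prob_compl_eq_one_sub, hsmall,
    (hW.iIndepFun_gridIncrement N).measure_inter_preimage_eq_mul _ fun _ _ => measurableSet_Iio]
  · simp [hsmall_k]
  · rw [hsmall]
    exact Finset.measurableSet_biInter _ fun k _ =>
      hW.measurable_gridIncrement N k measurableSet_Iio

lemma ofReal_mul_measure_le_eulerErr (hW : IsStdBM P W) (N : ℕ) (c : ℝ) :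
    ENNReal.ofReal c * P {ω | ∃ k : Fin N, c ≤ gridIncrement W N k ω} ≤ eulerErr P W N := by
  have hmeas : MeasurableSet {ω | ∃ k : Fin N, c ≤ gridIncrement W N k ω} := by
    simp only [ofPred_exists]
    exact .iUnion fun k => measurableSet_le measurable_const (hW.measurable_gridIncrement N k)
  rw [← lintegral_indicator_const hmeas]
  refine lintegral_mono fun ω => ?_
  by_cases hω : ω ∈ {ω | ∃ k : Fin N, c ≤ gridIncrement W N k ω}
  · rw [indicator_of_mem hω]
    obtain ⟨k, hk⟩ := hω
    exact ENNReal.ofReal_le_ofReal <| hk.trans <| (le_abs_self _).trans <|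
      abs_sub_le_sSup_abs_sub_floor ((hW.2.2.1 ω).mono Icc_subset_Ici_self) k.isLt
  · simp [indicator_of_notMem hω]

lemma ofReal_mul_le_sqrt_mul_eulerErr [IsProbabilityMeasure P] (hW : IsStdBM P W) {N : ℕ}
    (hN : N ≠ 0) (a : ℝ) :
    ENNReal.ofReal a * (1 - (1 - gaussianReal 0 1 (Ici a)) ^ N) ≤
      ENNReal.ofReal √N * eulerErr P W N := by
  have hsqrt : 0 < √(N : ℝ) := sqrt_pos.2 (by positivity)
  calc ENNReal.ofReal a * (1 - (1 - gaussianReal 0 1 (Ici a)) ^ N)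
      = ENNReal.ofReal √N * (ENNReal.ofReal (a / √N) *
          P {ω | ∃ k : Fin N, a / √N ≤ gridIncrement W N k ω}) := by
        rw [hW.measure_exists_le_gridIncrement hN, ← mul_assoc, ← ENNReal.ofReal_mul hsqrt.le,
          mul_div_cancel₀ a hsqrt.ne']
    _ ≤ ENNReal.ofReal √N * eulerErr P W N := by
        gcongr; exact hW.ofReal_mul_measure_le_eulerErr N _

end IsStdBM

lemma not_exists_le_mul_rpow_neg_half_of_tendsto {e : ℕ → ℝ≥0∞}
    (he : Tendsto (fun N : ℕ => ENNReal.ofReal √N * e N) atTop (𝓝 ⊤)) :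
    ¬ ∃ K : ℝ, ∀ N : ℕ, 1 ≤ N →
      e N ≤ ENNReal.ofReal (K * (N : ℝ) ^ (-(1 / 2 : ℝ))) := by
  rintro ⟨K, hK⟩
  obtain ⟨N, hNK, hN⟩ :=
    ((he.eventually (eventually_gt_nhds ENNReal.ofReal_lt_top)).and
      (eventually_ge_atTop 1)).exists
  have hN' : (0 : ℝ) < N := by exact_mod_cast hN
  refine hNK.not_ge ?_
  calc ENNReal.ofReal √N * e N
      ≤ ENNReal.ofReal √N * ENNReal.ofReal (K * (N : ℝ) ^ (-(1 / 2 : ℝ))) := by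
        gcongr; exact hK N hN
    _ = ENNReal.ofReal K := by
        rw [← ENNReal.ofReal_mul (sqrt_nonneg _), rpow_neg hN'.le, ← sqrt_eq_rpow]
        field_simp

/-- For a standard Brownian motion `W`,
`√N · E[ sup_{0 ≤ t ≤ 1} |W_t − W_{⌊Nt⌋/N}| ] → ∞` as `N → ∞`; in particular
there is no constant `K` with
`E[ sup_{0 ≤ t ≤ 1} |W_t − W_{⌊Nt⌋/N}| ] ≤ K·N^{-1/2}` for all `N ≥ 1`:
the piecewise constant (Euler) interpolation of Brownian motion does not
converge strongly at rate `N^{-1/2}` in the uniform norm. -/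
theorem euler_interpolation_not_rate_half
    {Ω : Type*} [MeasurableSpace Ω] (P : Measure Ω) [IsProbabilityMeasure P]
    (W : ℝ → Ω → ℝ) (hW : IsStdBM P W) :
    Filter.Tendsto
      (fun N : ℕ => ENNReal.ofReal (Real.sqrt N) * eulerErr P W N)
      Filter.atTop (nhds ⊤) ∧
    ¬ ∃ K : ℝ, ∀ N : ℕ, 1 ≤ N →
      eulerErr P W N ≤ ENNReal.ofReal (K * (N : ℝ) ^ (-(1/2 : ℝ))) := by
  set q := exp (-(exp (-1) / √(2 * π)))
  have hq : 0 < 1 - q := sub_pos.2 (exp_lt_one_iff.2 (neg_neg_of_pos (by positivity)))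
  have hlower : ∀ᶠ N : ℕ in atTop,
      ENNReal.ofReal (√(log N) * (1 - q)) ≤ ENNReal.ofReal √N * eulerErr P W N := by
    filter_upwards [eventually_ge_atTop 1] with N hN
    calc ENNReal.ofReal (√(log N) * (1 - q))
        = ENNReal.ofReal √(log N) * (1 - ENNReal.ofReal q) := by
          rw [ENNReal.ofReal_mul (sqrt_nonneg _), ENNReal.ofReal_sub _ (exp_pos _).le,
            ENNReal.ofReal_one]
      _ ≤ ENNReal.ofReal √(log N) * (1 - (1 - gaussianReal 0 1 (Ici √(log N))) ^ N) := by
          gcongr; exact one_sub_gaussianReal_Ici_sqrt_log_pow_le hN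
      _ ≤ ENNReal.ofReal √N * eulerErr P W N :=
          hW.ofReal_mul_le_sqrt_mul_eulerErr (by omega) _
  have hsqrt_log : Tendsto (fun N : ℕ => √(log N) * (1 - q)) atTop atTop :=
    (tendsto_sqrt_atTop.comp
      (tendsto_log_atTop.comp tendsto_natCast_atTop_atTop)).atTop_mul_const hq
  have htop := tendsto_nhds_top_mono (ENNReal.tendsto_ofReal_atTop.comp hsqrt_log) hlower
  exact ⟨htop, not_exists_le_mul_rpow_neg_half_of_tendsto htop⟩
end
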